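/- arXiv:2310.09841 — 6 statements merged into one kernel-verified Lean document; each statement's English description precedes it below -/
import Mathlib

section
/- Let B⟨X⟩ be the free product of a unital ℂ-algebra B with ℂ⟨X⟩ and let δ = δ_{X:B} be the cyclic derivative. Then ker(δ) = B + [B⟨X⟩, B⟨X⟩], where [B⟨X⟩, B⟨X⟩] is the linear span of commutators. -/
/-!
The cyclic derivative satisfies `δ(pq) = δ(qp)` and kills `B`, so it vanishes on
`B + [B⟨X⟩, B⟨X⟩]`. Conversely, the number operator `N = ∂* ∘ ∂` satisfies
`N a ≡ X · δ a` modulo commutators, so `N` maps `ker δ` into the commutator span. Grading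
`B⟨X⟩` by the degree in `X` (the algebra map `b ↦ b`, `X ↦ X t` into `B⟨X⟩[t]`), `N` multiplies
the component of degree `n` by `n`, and taking components preserves the commutator span. Hence
every component of positive degree of an element of `ker δ` is a sum of commutators, while its
component of degree `0` lies in `B`.
-/

open scoped TensorProduct

noncomputable section

/-- `(A, ι, X)` is the free product `B *_ℂ ℂ⟨X⟩`, characterized by its universal
property: every algebra map `φ : B → C` together with a choice of element `x ∈ C`
extends uniquely to an algebra map `A → C` sending `X` to `x`. -/
def IsFreeProduct {B A : Type} [Ring B] [Algebra ℂ B] [Ring A] [Algebra ℂ A]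
    (ι : B →ₐ[ℂ] A) (X : A) : Prop :=
  ∀ (C : Type) [Ring C] [Algebra ℂ C], ∀ (φ : B →ₐ[ℂ] C) (x : C),
    ∃! ψ : A →ₐ[ℂ] C, ψ.comp ι = φ ∧ ψ X = x

/-- the monomial `b₀ X b₁ ⋯ X bₙ`, where `bs = [b₁, …, bₙ]`. -/
def mono {B A : Type} [Ring B] [Algebra ℂ B] [Ring A] [Algebra ℂ A]
    (ι : B →ₐ[ℂ] A) (X : A) (b0 : B) (bs : List B) : A :=
  ι b0 * (bs.map (fun b => X * ι b)).prod

/-- the cyclic derivative `δ = μ ∘ σ ∘ ∂` associated with a difference quotient `D`. -/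
def cyclicDer {A : Type} [Ring A] [Algebra ℂ A] (D : A →ₗ[ℂ] A ⊗[ℂ] A) : A →ₗ[ℂ] A :=
  (LinearMap.mul' ℂ A) ∘ₗ (TensorProduct.comm ℂ A A).toLinearMap ∘ₗ D

/-- the operation `u # b`, determined by `(a ⊗ c) # b = a b c`. -/
def sharp {A : Type} [Ring A] [Algebra ℂ A] (u : A ⊗[ℂ] A) (b : A) : A :=
  LinearMap.mul' ℂ A (u * (b ⊗ₜ[ℂ] (1 : A)))

/-- the divergence operator `∂* : u ↦ u # X`, i.e. `(a ⊗ c) ↦ a X c`. -/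
def divg {A : Type} [Ring A] [Algebra ℂ A] (X : A) : A ⊗[ℂ] A →ₗ[ℂ] A :=
  (LinearMap.mul' ℂ A) ∘ₗ (LinearMap.mulRight ℂ (X ⊗ₜ[ℂ] (1 : A)))

/-- the number operator `N = ∂* ∘ ∂`. -/
def numOp {A : Type} [Ring A] [Algebra ℂ A] (X : A) (D : A →ₗ[ℂ] A ⊗[ℂ] A) :
    A →ₗ[ℂ] A :=
  divg X ∘ₗ D

open Polynomial

abbrev commutatorSpan (R A : Type*) [CommRing R] [Ring A] [Algebra R A] : Submodule R A :=
  Submodule.span R {x : A | ∃ p q : A, x = p * q - q * p}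

section Commutators

variable {R A A' : Type*} [CommRing R] [Ring A] [Algebra R A] [Ring A'] [Algebra R A']

lemma commutatorSpan_le_comap (f : A →ₐ[R] A') :
    commutatorSpan R A ≤ (commutatorSpan R A').comap f.toLinearMap :=
  Submodule.span_le.2 fun _ ⟨p, q, hx⟩ =>
    Submodule.subset_span ⟨f p, f q, by simp [hx]⟩

lemma coeff_mem_commutatorSpan {x : A[X]} (hx : x ∈ commutatorSpan R A[X]) (n : ℕ) :
    x.coeff n ∈ commutatorSpan R A := by
  induction hx using Submodule.span_induction with
  | mem x hx =>
    obtain ⟨p, q, rfl⟩ := hx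
    rw [coeff_sub, coeff_mul, coeff_mul, ← Finset.Nat.sum_antidiagonal_swap,
      ← Finset.sum_sub_distrib]
    exact Submodule.sum_mem _ fun ij _ => Submodule.subset_span ⟨_, _, rfl⟩
  | zero => simp
  | add x y _ _ hx hy => simpa using Submodule.add_mem _ hx hy
  | smul c x _ hx => simpa using Submodule.smul_mem _ c hx

end Commutators

section Polynomial

variable {R A : Type*} [CommRing R] [Ring A] [Algebra R A]

def evalCentral (z : A) (hz : ∀ a : A, Commute a z) : A[X] →ₐ[R] A :=
  { eval₂RingHom' (RingHom.id A) z hz with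
    commutes' := fun r => by simp [Polynomial.algebraMap_apply] }

lemma evalCentral_apply (z : A) (hz : ∀ a : A, Commute a z) (p : A[X]) :
    evalCentral (R := R) z hz p = p.eval z := rfl

lemma coeff_X_mul_derivative (p : A[X]) (n : ℕ) :
    (X * derivative p).coeff n = p.coeff n * n := by
  cases n with
  | zero => simp
  | succ n => simp [coeff_X_mul, coeff_derivative]

end Polynomial

section DifferenceQuotient

variable {A : Type} [Ring A] [Algebra ℂ A] {D : A →ₗ[ℂ] A ⊗[ℂ] A}

lemma mul'_comm_tmul_one_mul (p : A) (u : A ⊗[ℂ] A) :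
    LinearMap.mul' ℂ A (TensorProduct.comm ℂ A A ((p ⊗ₜ[ℂ] (1 : A)) * u)) =
      LinearMap.mul' ℂ A (TensorProduct.comm ℂ A A (u * ((1 : A) ⊗ₜ[ℂ] p))) := by
  induction u using TensorProduct.induction_on with
  | zero => simp
  | tmul e f => simp [LinearMap.mul'_apply, mul_assoc]
  | add u v hu hv => simp only [mul_add, add_mul, map_add, hu, hv]

lemma divg_tmul_one_mul (X p : A) (u : A ⊗[ℂ] A) :
    divg X ((p ⊗ₜ[ℂ] (1 : A)) * u) = p * divg X u := by
  induction u using TensorProduct.induction_on with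
  | zero => simp
  | tmul e f => simp [divg, LinearMap.mul'_apply, mul_assoc]
  | add u v hu hv => simp only [mul_add, map_add, hu, hv]

lemma divg_mul_one_tmul (X q : A) (u : A ⊗[ℂ] A) :
    divg X (u * ((1 : A) ⊗ₜ[ℂ] q)) = divg X u * q := by
  induction u using TensorProduct.induction_on with
  | zero => simp
  | tmul e f => simp [divg, LinearMap.mul'_apply, mul_assoc]
  | add u v hu hv => simp only [add_mul, map_add, hu, hv]

/-- On `a ⊗ c` the difference is the commutator of `a` and `X * c`. -/
lemma divg_sub_mul_mem_commutatorSpan (X : A) (u : A ⊗[ℂ] A) :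
    divg X u - X * LinearMap.mul' ℂ A (TensorProduct.comm ℂ A A u) ∈ commutatorSpan ℂ A := by
  induction u using TensorProduct.induction_on with
  | zero => simp
  | tmul e f =>
    simp only [divg, LinearMap.comp_apply, LinearMap.mulRight_apply,
      Algebra.TensorProduct.tmul_mul_tmul, LinearMap.mul'_apply, TensorProduct.comm_tmul, mul_one]
    exact Submodule.subset_span ⟨e, X * f, by simp only [mul_assoc]⟩
  | add u v hu hv =>
    convert Submodule.add_mem _ hu hv using 1
    simp only [map_add, mul_add]
    abel

lemma numOp_mem_commutatorSpan {X a : A} (ha : cyclicDer D a = 0) :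
    numOp X D a ∈ commutatorSpan ℂ A := by
  have h := divg_sub_mul_mem_commutatorSpan X (D a)
  rwa [show LinearMap.mul' ℂ A (TensorProduct.comm ℂ A A (D a)) = 0 from ha, mul_zero,
    sub_zero] at h

variable (hD : ∀ p q : A, D (p * q) = (p ⊗ₜ[ℂ] (1 : A)) * D q + D p * ((1 : A) ⊗ₜ[ℂ] q))
include hD

lemma map_one_of_leibniz : D 1 = 0 := by
  have h := hD 1 1
  rw [mul_one, ← Algebra.TensorProduct.one_def, one_mul, mul_one, left_eq_add] at h
  exact h

lemma cyclicDer_mul_comm (p q : A) : cyclicDer D (p * q) = cyclicDer D (q * p) := by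
  simp only [cyclicDer, LinearMap.comp_apply, LinearEquiv.coe_toLinearMap, hD p q, hD q p,
    map_add, mul'_comm_tmul_one_mul p, mul'_comm_tmul_one_mul q]
  exact add_comm _ _

lemma commutatorSpan_le_ker_cyclicDer : commutatorSpan ℂ A ≤ LinearMap.ker (cyclicDer D) :=
  Submodule.span_le.2 fun _ ⟨p, q, hx⟩ => by
    simp [hx, cyclicDer_mul_comm hD p q]

lemma numOp_mul (X p q : A) :
    numOp X D (p * q) = p * numOp X D q + numOp X D p * q := by
  simp only [numOp, LinearMap.comp_apply, hD, map_add, divg_tmul_one_mul, divg_mul_one_tmul]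

end DifferenceQuotient

namespace IsFreeProduct

variable {B A : Type} [Ring B] [Algebra ℂ B] [Ring A] [Algebra ℂ A]
  {ι : B →ₐ[ℂ] A} {X : A} (hfree : IsFreeProduct ι X)
include hfree

lemma algHom_ext {C : Type} [Ring C] [Algebra ℂ C] {f g : A →ₐ[ℂ] C}
    (hι : f.comp ι = g.comp ι) (hX : f X = g X) : f = g :=
  (hfree C (g.comp ι) (g X)).unique ⟨hι, hX⟩ ⟨rfl, rfl⟩

def lift {C : Type} [Ring C] [Algebra ℂ C] (φ : B →ₐ[ℂ] C) (x : C) : A →ₐ[ℂ] C :=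
  (hfree C φ x).exists.choose

@[simp]
lemma lift_ι {C : Type} [Ring C] [Algebra ℂ C] (φ : B →ₐ[ℂ] C) (x : C) (b : B) :
    hfree.lift φ x (ι b) = φ b :=
  DFunLike.congr_fun (hfree C φ x).exists.choose_spec.1 b

@[simp]
lemma lift_X {C : Type} [Ring C] [Algebra ℂ C] (φ : B →ₐ[ℂ] C) (x : C) :
    hfree.lift φ x X = x :=
  (hfree C φ x).exists.choose_spec.2

lemma adjoin_eq_top : Algebra.adjoin ℂ (Set.range ι ∪ {X}) = ⊤ := by
  set S := Algebra.adjoin ℂ (Set.range ι ∪ {X})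
  have hι : ∀ b, ι b ∈ S := fun b => Algebra.subset_adjoin (Or.inl ⟨b, rfl⟩)
  have hX : X ∈ S := Algebra.subset_adjoin (Or.inr rfl)
  have hsection : S.val.comp (hfree.lift (ι.codRestrict S hι) ⟨X, hX⟩) = AlgHom.id ℂ A :=
    hfree.algHom_ext (by ext b; simp) (by simp)
  refine eq_top_iff.2 fun a _ => ?_
  rw [← AlgHom.id_apply (R := ℂ) a, ← hsection]
  exact SetLike.coe_mem _

/-- `(grading a).coeff n` is the homogeneous component of `a` of degree `n` in `X`. -/
def grading : A →ₐ[ℂ] A[X] :=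
  hfree.lift (Polynomial.CAlgHom.comp ι) (C X * Polynomial.X)

lemma eval_one_grading (a : A) : (hfree.grading a).eval 1 = a := by
  have h : (evalCentral 1 fun a => Commute.one_right a).comp hfree.grading = AlgHom.id ℂ A :=
    hfree.algHom_ext (by ext b; simp [grading, evalCentral_apply])
      (by simp [grading, evalCentral_apply])
  exact DFunLike.congr_fun h a

lemma coeff_zero_grading_mem_range (a : A) :
    (hfree.grading a).coeff 0 ∈ LinearMap.range ι.toLinearMap := by
  have h : (evalCentral 0 fun a => Commute.zero_right a).comp hfree.grading =
      ι.comp (hfree.lift (AlgHom.id ℂ B) 0) :=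
    hfree.algHom_ext (by ext b; simp [grading, evalCentral_apply])
      (by simp [grading, evalCentral_apply])
  refine ⟨hfree.lift (AlgHom.id ℂ B) 0 a, ?_⟩
  simpa [coeff_zero_eq_eval_zero, evalCentral_apply] using (DFunLike.congr_fun h a).symm

end IsFreeProduct

section NumberOperator

variable {B A : Type} [Ring B] [Algebra ℂ B] [Ring A] [Algebra ℂ A]
  {ι : B →ₐ[ℂ] A} {X : A} (hfree : IsFreeProduct ι X) {D : A →ₗ[ℂ] A ⊗[ℂ] A}
  (hD : ∀ p q : A, D (p * q) = (p ⊗ₜ[ℂ] (1 : A)) * D q + D p * ((1 : A) ⊗ₜ[ℂ] q))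
include hfree hD

/-- Both sides are derivations along `grading` that agree on the generators `ι b` and `X`. -/
lemma grading_numOp (hDX : D X = (1 : A) ⊗ₜ[ℂ] (1 : A)) (hDB : ∀ b : B, D (ι b) = 0) (a : A) :
    hfree.grading (numOp X D a) = Polynomial.X * derivative (hfree.grading a) := by
  have ha : a ∈ Algebra.adjoin ℂ (Set.range ι ∪ {X}) := hfree.adjoin_eq_top ▸ trivial
  induction ha using Algebra.adjoin_induction with
  | mem x hx =>
    obtain ⟨b, rfl⟩ | rfl := hx
    · simp [numOp, hDB, IsFreeProduct.grading]
    · simp [numOp, hDX, divg, IsFreeProduct.grading, LinearMap.mul'_apply, X_mul]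
  | algebraMap r =>
    simp [Algebra.algebraMap_eq_smul_one, numOp, map_one_of_leibniz hD]
  | add x y _ _ hx hy => simp only [map_add, hx, hy, mul_add]
  | mul x y _ _ hx hy =>
    rw [numOp_mul hD, map_add, map_mul, map_mul, hx, hy, map_mul, derivative_mul, mul_add,
      ← mul_assoc, ← (commute_X _).eq, mul_assoc, mul_assoc, add_comm]

lemma coeff_grading_mem_commutatorSpan (hDX : D X = (1 : A) ⊗ₜ[ℂ] (1 : A))
    (hDB : ∀ b : B, D (ι b) = 0) {a : A} (ha : cyclicDer D a = 0) {n : ℕ} (hn : n ≠ 0) :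
    (hfree.grading a).coeff n ∈ commutatorSpan ℂ A := by
  have hN : (hfree.grading (numOp X D a)).coeff n ∈ commutatorSpan ℂ A :=
    coeff_mem_commutatorSpan
      (commutatorSpan_le_comap hfree.grading (numOp_mem_commutatorSpan ha)) n
  rw [grading_numOp hfree hD hDX hDB, coeff_X_mul_derivative, ← Nat.cast_comm, ← nsmul_eq_mul,
    ← Nat.cast_smul_eq_nsmul ℂ] at hN
  exact (Submodule.smul_mem_iff _ (Nat.cast_ne_zero.2 hn)).1 hN

end NumberOperator

/-- The kernel of the cyclic derivative `δ_{X:B}` on `B⟨X⟩` equals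
`B + [B⟨X⟩, B⟨X⟩]`. -/
theorem ker_cyclicDer_eq
    {B A : Type} [Ring B] [Algebra ℂ B] [Ring A] [Algebra ℂ A]
    (ι : B →ₐ[ℂ] A) (X : A) (hfree : IsFreeProduct ι X)
    (D : A →ₗ[ℂ] A ⊗[ℂ] A)
    (hD : ∀ p q : A, D (p * q) = (p ⊗ₜ[ℂ] (1 : A)) * D q + D p * ((1 : A) ⊗ₜ[ℂ] q))
    (hDX : D X = (1 : A) ⊗ₜ[ℂ] (1 : A))
    (hDB : ∀ b : B, D (ι b) = 0) :
    LinearMap.ker (cyclicDer D) =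
      LinearMap.range ι.toLinearMap ⊔
        Submodule.span ℂ {x : A | ∃ p q : A, x = p * q - q * p} := by
  refine le_antisymm (fun a ha => ?_) (sup_le ?_ (commutatorSpan_le_ker_cyclicDer hD))
  · have hsum : a = (hfree.grading a).sum fun _ c => c := by
      simpa [eval_eq_sum] using (hfree.eval_one_grading a).symm
    rw [hsum]
    refine Submodule.sum_mem _ fun n _ => ?_
    rcases eq_or_ne n 0 with rfl | hn
    · exact Submodule.mem_sup_left (hfree.coeff_zero_grading_mem_range a)
    · exact Submodule.mem_sup_right
        (coeff_grading_mem_commutatorSpan hfree hD hDX hDB ha hn)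
  · rintro _ ⟨b, rfl⟩
    simp [cyclicDer, hDB]
end
end

section
/- Let B⟨X⟩ be the free product of a unital ℂ-algebra B with ℂ⟨X⟩, δ = δ_{X:B} the cyclic derivative, and Θ = id − ρ where ρ is the linear map with ρ[b₀Xb₁⋯Xb_n] = b₁Xb₂⋯Xb_nXb₀ on monomials (and ρ[b₀] = b₀ for degree-0 monomials). Then for any q ∈ B⟨X⟩: there exists p ∈ B⟨X⟩ with δ[p] = q if and only if Θ[q] = 0. -/
open scoped TensorProduct

set_option linter.unusedSectionVars false
noncomputable section

section Aux
variable {B A : Type} [Ring B] [Algebra ℂ B] [Ring A] [Algebra ℂ A]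
  (ι : B →ₐ[ℂ] A) (X : A)

lemma mono_nil (b0 : B) : mono ι X b0 [] = ι b0 := by simp [mono]

lemma mono_cons (b0 b1 : B) (bs : List B) :
    mono ι X b0 (b1 :: bs) = ι b0 * (X * mono ι X b1 bs) := by
  simp [mono, mul_assoc]

lemma mono_concat (b0 b : B) (bs : List B) :
    mono ι X b0 (bs ++ [b]) = mono ι X b0 bs * (X * ι b) := by
  simp [mono, mul_assoc]

lemma mono_mul_X_mono (c : B) (cs : List B) (b0 : B) (ts : List B) :
    mono ι X c cs * (X * mono ι X b0 ts) = mono ι X c (cs ++ b0 :: ts) := by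
  simp [mono, mul_assoc]

lemma mono_mul_mono (bs : List B) (b0 c0 : B) (cs : List B) :
    ∃ d ds, mono ι X b0 bs * mono ι X c0 cs = mono ι X d ds ∧
      ds.length = bs.length + cs.length := by
  rcases List.eq_nil_or_concat bs with h | ⟨l, b, h⟩ <;> subst h
  · exact ⟨b0 * c0, cs, by simp [mono, mul_assoc], by simp⟩
  · refine ⟨b0, l ++ (b * c0) :: cs, ?_, by simp; omega⟩
    simp [mono, mul_assoc]

/-- head-tail monomial on a list (1 on the empty list) -/
def monoL (l : List B) : A :=
  match l with
  | [] => 1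
  | b :: bs => mono ι X b bs

/-- one-step cyclic rotation of a list -/
def rot1 : List B → List B
  | [] => []
  | b :: bs => bs ++ [b]

lemma rot1_length (l : List B) : (rot1 (B := B) l).length = l.length := by
  cases l <;> simp [rot1]

lemma rot1_ne_nil {l : List B} (h : l ≠ []) : rot1 (B := B) l ≠ [] := by
  cases l with
  | nil => exact absurd rfl h
  | cons b bs => simp [rot1]

lemma rot_take_drop : ∀ (k : ℕ) (l : List B), k ≤ l.length →
    (rot1 (B := B))^[k] l = l.drop k ++ l.take k := by
  intro k
  induction k with
  | zero => intro l _; simp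
  | succ k ih =>
    intro l hk
    have hklt : k < l.length := Nat.lt_of_succ_le hk
    rw [Function.iterate_succ_apply', ih l (Nat.le_of_lt hklt)]
    have hdrop : l.drop k = l.get ⟨k, hklt⟩ :: l.drop (k + 1) := List.drop_eq_getElem_cons hklt
    rw [hdrop]
    have htake : l.take (k + 1) = l.take k ++ [l.get ⟨k, hklt⟩] := by
      rw [List.take_succ, List.getElem?_eq_getElem hklt]
      simp
    rw [htake]
    show rot1 (l.get ⟨k, hklt⟩ :: (l.drop (k+1) ++ l.take k)) = _
    simp [rot1]
end Aux

section Aux2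
variable {B A : Type} [Ring B] [Algebra ℂ B] [Ring A] [Algebra ℂ A]
  (ι : B →ₐ[ℂ] A) (X : A)
  (ρ : A →ₗ[ℂ] A)
  (hρ0 : ∀ b0 : B, ρ (mono ι X b0 []) = mono ι X b0 [])
  (hρ : ∀ (b0 b1 : B) (bs : List B),
      ρ (mono ι X b0 (b1 :: bs)) = mono ι X b1 bs * X * ι b0)

include hρ0 hρ in
lemma rho_monoL {l : List B} (h : l ≠ []) :
    ρ (monoL ι X l) = monoL ι X (rot1 l) := by
  match l with
  | [b] => simpa [monoL, rot1] using hρ0 b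
  | b :: c :: cs =>
    show ρ (mono ι X b (c :: cs)) = mono ι X c (cs ++ [b])
    rw [hρ, mono_concat, mul_assoc]

include hρ0 hρ in
lemma rho_pow_monoL {l : List B} (h : l ≠ []) (k : ℕ) :
    (ρ ^ k) (monoL ι X l) = monoL ι X (rot1^[k] l) := by
  induction k with
  | zero => simp
  | succ k ih =>
    have hne : (rot1 (B := B))^[k] l ≠ [] := by
      intro hc
      apply h
      have := congrArg List.length hc
      rw [show ∀ m, ((rot1 (B := B))^[m] l).length = l.length from ?_] at this
      · exact List.eq_nil_of_length_eq_zero this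
      · intro m
        induction m with
        | zero => rfl
        | succ m ihm => rw [Function.iterate_succ_apply', rot1_length, ihm]
    rw [pow_succ', Module.End.mul_apply, ih, rho_monoL ι X ρ hρ0 hρ hne,
      Function.iterate_succ_apply']

include hρ0 hρ in
lemma rho_pow_full {l : List B} (h : l ≠ []) :
    (ρ ^ l.length) (monoL ι X l) = monoL ι X l := by
  rw [rho_pow_monoL ι X ρ hρ0 hρ h, rot_take_drop _ _ (le_refl _)]
  simp

end Aux2

section Aux3
variable {A : Type} [Ring A] [Algebra ℂ A]

/-- μ ∘ σ -/
def muSig (A : Type) [Ring A] [Algebra ℂ A] : A ⊗[ℂ] A →ₗ[ℂ] A :=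
  (LinearMap.mul' ℂ A) ∘ₗ (TensorProduct.comm ℂ A A).toLinearMap

lemma muSig_tmul (a c : A) : muSig A (a ⊗ₜ[ℂ] c) = c * a := by
  simp [muSig]

lemma muSig_scalar_move (w : A) (u : A ⊗[ℂ] A) :
    muSig A ((w ⊗ₜ[ℂ] (1 : A)) * u) = muSig A (u * ((1 : A) ⊗ₜ[ℂ] w)) := by
  induction u using TensorProduct.induction_on with
  | zero => simp
  | tmul a c => simp [Algebra.TensorProduct.tmul_mul_tmul, muSig_tmul, mul_assoc]
  | add x y hx hy => simp [mul_add, add_mul, map_add, hx, hy]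

end Aux3

section Aux4
variable {B A : Type} [Ring B] [Algebra ℂ B] [Ring A] [Algebra ℂ A]
  (ι : B →ₐ[ℂ] A) (X : A)
  (D : A →ₗ[ℂ] A ⊗[ℂ] A)
  (hD : ∀ p q : A, D (p * q) = (p ⊗ₜ[ℂ] (1 : A)) * D q + D p * ((1 : A) ⊗ₜ[ℂ] q))
  (hDX : D X = (1 : A) ⊗ₜ[ℂ] (1 : A))
  (hDB : ∀ b : B, D (ι b) = 0)

include hD hDX hDB in
lemma Fmono : ∀ (bs : List B) (w : A) (b0 : B),
    muSig A ((w ⊗ₜ[ℂ] (1 : A)) * D (mono ι X b0 bs)) =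
      ∑ j ∈ Finset.range bs.length,
        monoL ι X (bs.drop j) * w * mono ι X b0 (bs.take j) := by
  intro bs
  induction bs with
  | nil =>
    intro w b0
    rw [mono_nil, hDB]
    simp
  | cons b1 bs ih =>
    intro w b0
    have hDm : D (mono ι X b0 (b1 :: bs)) =
        ((ι b0 * X) ⊗ₜ[ℂ] (1 : A)) * D (mono ι X b1 bs)
          + (ι b0) ⊗ₜ[ℂ] (mono ι X b1 bs) := by
      rw [mono_cons, hD, hD, hDX, hDB]
      simp only [zero_mul, add_zero, mul_add, ← mul_assoc,
        Algebra.TensorProduct.tmul_mul_tmul, mul_one, one_mul]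
    rw [hDm, mul_add, map_add, ← mul_assoc, Algebra.TensorProduct.tmul_mul_tmul,
      mul_one, ih, Algebra.TensorProduct.tmul_mul_tmul, one_mul, muSig_tmul,
      List.length_cons, Finset.sum_range_succ']
    congr 1
    · refine Finset.sum_congr rfl fun j _ => ?_
      show monoL ι X (bs.drop j) * (w * (ι b0 * X)) * mono ι X b1 (bs.take j) =
        monoL ι X (bs.drop j) * w * mono ι X b0 (b1 :: bs.take j)
      rw [mono_cons]
      simp [mul_assoc]
    · show mono ι X b1 bs * (w * ι b0) =
        monoL ι X (b1 :: bs) * w * mono ι X b0 []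
      rw [mono_nil]
      show _ = mono ι X b1 bs * w * ι b0
      rw [mul_assoc]

include hD hDX in
lemma deltaX_eq (u : A) :
    cyclicDer D (X * u) = muSig A ((X ⊗ₜ[ℂ] (1 : A)) * D u) + u := by
  have : cyclicDer D (X * u) = muSig A (D (X * u)) := rfl
  rw [this, hD, hDX, map_add]
  congr 1
  rw [Algebra.TensorProduct.tmul_mul_tmul, one_mul, one_mul, muSig_tmul, mul_one]

include hD hDX hDB in
lemma PhiMono (b0 : B) (bs : List B) :
    cyclicDer D (X * mono ι X b0 bs) =
      ∑ k ∈ Finset.range (bs.length + 1), monoL ι X (rot1^[k] (b0 :: bs)) := by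
  rw [deltaX_eq X D hD hDX, Fmono ι X D hD hDX hDB, Finset.sum_range_succ']
  congr 1
  · refine Finset.sum_congr rfl fun j hj => ?_
    have hj' : j < bs.length := Finset.mem_range.mp hj
    have hdrop_ne : bs.drop j ≠ [] := by
      intro hc
      have := congrArg List.length hc
      simp at this
      omega
    have h1 : monoL ι X (bs.drop j) * X * mono ι X b0 (bs.take j) =
        monoL ι X (bs.drop j ++ b0 :: bs.take j) := by
      obtain ⟨c, cs, hcc⟩ := List.exists_cons_of_ne_nil hdrop_ne
      rw [hcc]
      show mono ι X c cs * X * mono ι X b0 (bs.take j) = mono ι X c (cs ++ b0 :: bs.take j)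
      rw [mul_assoc, mono_mul_X_mono]
    rw [h1]
    congr 1
    rw [rot_take_drop (j + 1) (b0 :: bs) (by simp; omega)]
    simp
end Aux4

section Aux5
variable {B A : Type} [Ring B] [Algebra ℂ B] [Ring A] [Algebra ℂ A]
  (ι : B →ₐ[ℂ] A) (X : A)


lemma span_monos_top (hfree : IsFreeProduct ι X) :
    ∀ a : A, a ∈ Submodule.span ℂ {a : A | ∃ b0 bs, a = mono ι X b0 bs} := by
  set s : Set A := {a : A | ∃ b0 bs, a = mono ι X b0 bs} with hs
  set M := Submodule.span ℂ s with hM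
  have h1 : (1 : A) ∈ M := Submodule.subset_span ⟨1, [], by simp [mono]⟩
  have hmulle : M * M ≤ M := by
    rw [hM, Submodule.span_mul_span]
    apply Submodule.span_le.mpr
    rintro x ⟨a, ha, b, hb, rfl⟩
    obtain ⟨b0, bs, rfl⟩ := ha
    obtain ⟨c0, cs, rfl⟩ := hb
    obtain ⟨d, ds, hd, -⟩ := mono_mul_mono ι X bs b0 c0 cs
    exact Submodule.subset_span ⟨d, ds, hd⟩
  let S : Subalgebra ℂ A := M.toSubalgebra h1
    (fun x y hx hy => hmulle (Submodule.mul_mem_mul hx hy))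
  -- the adjoin of the generators is everything
  set T := Algebra.adjoin ℂ ({X} ∪ Set.range ι) with hT
  have hXT : X ∈ T := Algebra.subset_adjoin (Or.inl rfl)
  have hιT : ∀ b, ι b ∈ T := fun b => Algebra.subset_adjoin (Or.inr ⟨b, rfl⟩)
  have hTtop : ∀ a : A, a ∈ T := by
    obtain ⟨ψ, ⟨hψι, hψX⟩, -⟩ :=
      hfree T (AlgHom.codRestrict ι T hιT) ⟨X, hXT⟩
    obtain ⟨χ, -, huniq⟩ := hfree A ι X
    have e1 : T.val.comp ψ = AlgHom.id ℂ A := by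
      have h2 : T.val.comp ψ = χ := by
        apply huniq
        constructor
        · rw [AlgHom.comp_assoc, hψι]
          ext b
          rfl
        · show T.val (ψ X) = X
          rw [hψX]
          rfl
      have h3 : AlgHom.id ℂ A = χ := by
        apply huniq
        exact ⟨by ext b; rfl, rfl⟩
      rw [h2, ← h3]
    intro a
    have := congrArg (fun f => f a) e1
    simp only [AlgHom.coe_comp, Function.comp_apply, AlgHom.coe_id, id_eq] at this
    rw [← this]
    exact (ψ a).2
  have hTS : T ≤ S := by
    apply Algebra.adjoin_le_iff.mpr
    rintro y hy
    rcases hy with hy | ⟨b, rfl⟩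
    · show y ∈ M
      rw [Set.mem_singleton_iff] at hy
      rw [hy, show X = mono ι X 1 [1] by simp [mono]]
      exact Submodule.subset_span ⟨1, [1], rfl⟩
    · show ι b ∈ M
      exact Submodule.subset_span ⟨b, [], (mono_nil ι X b).symm⟩
  exact fun a => hTS (hTtop a)

end Aux5

section Aux6
variable {B A : Type} [Ring B] [Algebra ℂ B] [Ring A] [Algebra ℂ A]
  (ι : B →ₐ[ℂ] A) (X : A)
  (D : A →ₗ[ℂ] A ⊗[ℂ] A)
  (hD : ∀ p q : A, D (p * q) = (p ⊗ₜ[ℂ] (1 : A)) * D q + D p * ((1 : A) ⊗ₜ[ℂ] q))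
  (hDX : D X = (1 : A) ⊗ₜ[ℂ] (1 : A))
  (hDB : ∀ b : B, D (ι b) = 0)
  (ρ : A →ₗ[ℂ] A)
  (hρ0 : ∀ b0 : B, ρ (mono ι X b0 []) = mono ι X b0 [])
  (hρ : ∀ (b0 b1 : B) (bs : List B),
      ρ (mono ι X b0 (b1 :: bs)) = mono ι X b1 bs * X * ι b0)

lemma rho_fix_pow {σ : A →ₗ[ℂ] A} {u : A} (h : σ u = u) (k : ℕ) : (σ ^ k) u = u := by
  induction k with
  | zero => simp
  | succ k ih => rw [pow_succ', Module.End.mul_apply, ih, h]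

include hD hDB in
lemma delta_scalar_comm (b : B) (r : A) :
    cyclicDer D (ι b * r) = cyclicDer D (r * ι b) := by
  show muSig A (D (ι b * r)) = muSig A (D (r * ι b))
  rw [hD, hD, hDB]
  simp only [zero_mul, add_zero, mul_zero, zero_add]
  exact muSig_scalar_move (ι b) (D r)

include hD hDX hDB hρ0 hρ in
lemma PhiMono_rho (b0 : B) (bs : List B) :
    cyclicDer D (X * mono ι X b0 bs) =
      ∑ k ∈ Finset.range (bs.length + 1), (ρ ^ k) (mono ι X b0 bs) := by
  rw [PhiMono ι X D hD hDX hDB]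
  exact Finset.sum_congr rfl fun k _ =>
    (rho_pow_monoL ι X ρ hρ0 hρ (List.cons_ne_nil b0 bs) k).symm

include hD hDX hDB hρ0 hρ in
lemma Phi_span (n : ℕ) :
    ∀ u ∈ Submodule.span ℂ {a : A | ∃ b0 bs, bs.length = n ∧ a = mono ι X b0 bs},
      cyclicDer D (X * u) = ∑ k ∈ Finset.range (n + 1), (ρ ^ k) u := by
  intro u hu
  refine Submodule.span_induction ?_ ?_ ?_ ?_ hu
  · rintro x ⟨b0, bs, hlen, rfl⟩
    rw [← hlen]
    exact PhiMono_rho ι X D hD hDX hDB ρ hρ0 hρ b0 bs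
  · simp
  · intro x y _ _ hx hy
    rw [mul_add, map_add, hx, hy, ← Finset.sum_add_distrib]
    exact Finset.sum_congr rfl fun k _ => (map_add _ _ _).symm
  · intro c x _ hx
    rw [mul_smul_comm, map_smul, hx, Finset.smul_sum]
    exact Finset.sum_congr rfl fun k _ => (map_smul _ _ _).symm

include hD hDX hDB hρ0 hρ in
lemma rho_delta (hfree : IsFreeProduct ι X) :
    ∀ p : A, ρ (cyclicDer D p) = cyclicDer D p := by
  intro p
  refine Submodule.span_induction ?_ ?_ ?_ ?_ (span_monos_top ι X hfree p)
  · rintro x ⟨b0, bs, rfl⟩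
    cases bs with
    | nil =>
      rw [mono_nil]
      have h0 : cyclicDer D (ι b0) = 0 := by
        show muSig A (D (ι b0)) = 0
        rw [hDB]
        simp
      rw [h0, map_zero]
    | cons b1 bs =>
      have key : cyclicDer D (mono ι X b0 (b1 :: bs)) =
          cyclicDer D (X * (mono ι X b1 bs * ι b0)) := by
        rw [mono_cons, delta_scalar_comm ι D hD hDB, mul_assoc]
      obtain ⟨d, ds, hd, hlen⟩ := mono_mul_mono ι X bs b1 b0 []
      rw [mono_nil] at hd
      rw [key, hd, PhiMono_rho ι X D hD hDX hDB ρ hρ0 hρ]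
      set u := mono ι X d ds with hu
      set m := ds.length + 1 with hm
      have hfull : (ρ ^ m) u = u := by
        have h := rho_pow_full ι X ρ hρ0 hρ (l := d :: ds) (List.cons_ne_nil d ds)
        simpa [monoL, hm] using h
      rw [map_sum]
      rw [show (∑ k ∈ Finset.range m, ρ ((ρ ^ k) u)) = ∑ k ∈ Finset.range m, (ρ ^ (k + 1)) u
        from Finset.sum_congr rfl fun k _ => by rw [pow_succ', Module.End.mul_apply]]
      have h2 := Finset.sum_range_succ' (fun k => (ρ ^ k) u) m
      have h3 := Finset.sum_range_succ (fun k => (ρ ^ k) u) m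
      rw [pow_zero, Module.End.one_apply] at h2
      rw [hfull] at h3
      have h4 : (∑ k ∈ Finset.range m, (ρ ^ (k + 1)) u) + u
          = (∑ k ∈ Finset.range m, (ρ ^ k) u) + u := h2.symm.trans h3
      exact add_right_cancel h4
  · simp
  · intro x y _ _ hx hy
    rw [map_add, map_add, hx, hy]
  · intro c x _ hx
    rw [map_smul, map_smul, hx]

end Aux6

section Aux7
variable {B A : Type} [Ring B] [Algebra ℂ B] [Ring A] [Algebra ℂ A]
  (ι : B →ₐ[ℂ] A) (X : A)
  (ψ : A →ₐ[ℂ] Polynomial A)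
  (hψι : ∀ b : B, ψ (ι b) = Polynomial.C (ι b))
  (hψX : ψ X = Polynomial.C X * Polynomial.X)

include hψι hψX in
lemma psi_mono : ∀ (bs : List B) (b0 : B),
    ψ (mono ι X b0 bs) = Polynomial.monomial bs.length (mono ι X b0 bs) := by
  intro bs
  induction bs with
  | nil =>
    intro b0
    rw [mono_nil, hψι, ← Polynomial.monomial_zero_left]
    rfl
  | cons b1 bs ih =>
    intro b0
    rw [show mono ι X b0 (b1 :: bs) = ι b0 * (X * mono ι X b1 bs) from mono_cons ι X b0 b1 bs,
      map_mul, map_mul, hψι, hψX, ih, mul_assoc, Polynomial.X_mul_monomial,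
      Polynomial.C_mul_monomial, Polynomial.C_mul_monomial, ← mono_cons]
    rfl

/-- degree-`n` component -/
def Ecoef (n : ℕ) : A →ₗ[ℂ] A :=
  (LinearMap.restrictScalars ℂ (Polynomial.lcoeff A n)) ∘ₗ ψ.toLinearMap

lemma Ecoef_apply (n : ℕ) (q : A) : Ecoef ψ n q = (ψ q).coeff n := rfl

include hψι hψX in
lemma Ecoef_mono (n : ℕ) (b0 : B) (bs : List B) :
    Ecoef ψ n (mono ι X b0 bs) =
      if bs.length = n then mono ι X b0 bs else 0 := by
  rw [Ecoef_apply, psi_mono ι X ψ hψι hψX, Polynomial.coeff_monomial]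

include hψι hψX in
lemma Ecoef_mem (hfree : IsFreeProduct ι X) (n : ℕ) (q : A) :
    Ecoef ψ n q ∈
      Submodule.span ℂ {a : A | ∃ b0 bs, bs.length = n ∧ a = mono ι X b0 bs} := by
  refine Submodule.span_induction ?_ ?_ ?_ ?_ (span_monos_top ι X hfree q)
  · rintro x ⟨b0, bs, rfl⟩
    rw [Ecoef_mono ι X ψ hψι hψX]
    split
    · exact Submodule.subset_span ⟨b0, bs, by assumption, rfl⟩
    · exact Submodule.zero_mem _
  · rw [map_zero]; exact Submodule.zero_mem _
  · intro x y _ _ hx hy; rw [map_add]; exact Submodule.add_mem _ hx hy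
  · intro c x _ hx; rw [map_smul]; exact Submodule.smul_mem _ _ hx

include hψι hψX in
lemma Ecoef_rho (hfree : IsFreeProduct ι X) (ρ : A →ₗ[ℂ] A)
    (hρ0 : ∀ b0 : B, ρ (mono ι X b0 []) = mono ι X b0 [])
    (hρ : ∀ (b0 b1 : B) (bs : List B),
      ρ (mono ι X b0 (b1 :: bs)) = mono ι X b1 bs * X * ι b0)
    (n : ℕ) (q : A) :
    Ecoef ψ n (ρ q) = ρ (Ecoef ψ n q) := by
  refine Submodule.span_induction ?_ ?_ ?_ ?_ (span_monos_top ι X hfree q)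
  · rintro x ⟨b0, bs, rfl⟩
    cases bs with
    | nil =>
      rw [hρ0, Ecoef_mono ι X ψ hψι hψX]
      split
      · exact (hρ0 b0).symm
      · rw [map_zero]
    | cons b1 bs =>
      have hrot : ρ (mono ι X b0 (b1 :: bs)) = mono ι X b1 (bs ++ [b0]) := by
        rw [hρ, mono_concat, mul_assoc]
      rw [hrot, Ecoef_mono ι X ψ hψι hψX, Ecoef_mono ι X ψ hψι hψX]
      by_cases h : bs.length + 1 = n
      · rw [if_pos (by simpa using h), if_pos (by simpa using h), hrot]
      · rw [if_neg (by simpa using h), if_neg (by simpa using h), map_zero]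
  · rw [map_zero, map_zero, map_zero]
  · intro x y _ _ hx hy; simp [map_add, hx, hy]
  · intro c x _ hx; simp [map_smul, hx]

include hψι hψX in
lemma eval_one_psi (hfree : IsFreeProduct ι X) (q : A) :
    Polynomial.eval 1 (ψ q) = q := by
  refine Submodule.span_induction ?_ ?_ ?_ ?_ (span_monos_top ι X hfree q)
  · rintro x ⟨b0, bs, rfl⟩
    rw [psi_mono ι X ψ hψι hψX, Polynomial.eval_monomial, one_pow, mul_one]
  · rw [map_zero, Polynomial.eval_zero]
  · intro x y _ _ hx hy; rw [map_add, Polynomial.eval_add, hx, hy]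
  · intro c x _ hx; rw [map_smul, Polynomial.eval_smul, hx]

end Aux7

/-- For `q ∈ B⟨X⟩`, the equation `δ_{X:B}[p] = q` has a solution iff `Θ[q] = 0`, where
`Θ = id − ρ` and `ρ` is the cyclic rotation `ρ[b₀Xb₁⋯Xbₙ] = b₁Xb₂⋯XbₙXb₀`
(with `ρ[b₀] = b₀` in degree 0). -/
theorem cyclicDer_range_iff_theta
    {B A : Type} [Ring B] [Algebra ℂ B] [Ring A] [Algebra ℂ A]
    (ι : B →ₐ[ℂ] A) (X : A) (hfree : IsFreeProduct ι X)
    (D : A →ₗ[ℂ] A ⊗[ℂ] A)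
    (hD : ∀ p q : A, D (p * q) = (p ⊗ₜ[ℂ] (1 : A)) * D q + D p * ((1 : A) ⊗ₜ[ℂ] q))
    (hDX : D X = (1 : A) ⊗ₜ[ℂ] (1 : A))
    (hDB : ∀ b : B, D (ι b) = 0)
    (ρ : A →ₗ[ℂ] A)
    (hρ0 : ∀ b0 : B, ρ (mono ι X b0 []) = mono ι X b0 [])
    (hρ : ∀ (b0 b1 : B) (bs : List B),
      ρ (mono ι X b0 (b1 :: bs)) = mono ι X b1 bs * X * ι b0) :
    ∀ q : A, (∃ p : A, cyclicDer D p = q) ↔ q - ρ q = 0 := by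

  intro q
  constructor
  · rintro ⟨p, rfl⟩
    rw [rho_delta ι X D hD hDX hDB ρ hρ0 hρ hfree p, sub_self]
  · intro hq
    have hqρ : ρ q = q := by
      have := sub_eq_zero.mp hq
      exact this.symm
    obtain ⟨ψ, ⟨hψι', hψX⟩, -⟩ :=
      hfree (Polynomial A) ((Polynomial.CAlgHom).comp ι) (Polynomial.C X * Polynomial.X)
    have hψι : ∀ b : B, ψ (ι b) = Polynomial.C (ι b) := by
      intro b
      have := DFunLike.congr_fun hψι' b
      simpa using this
    refine ⟨X * ∑ n ∈ (ψ q).support, ((n : ℂ) + 1)⁻¹ • Ecoef ψ n q, ?_⟩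
    rw [Finset.mul_sum, map_sum]
    have hterm : ∀ n : ℕ,
        cyclicDer D (X * (((n : ℂ) + 1)⁻¹ • Ecoef ψ n q)) = Ecoef ψ n q := by
      intro n
      rw [mul_smul_comm, map_smul]
      have h2 : ρ (Ecoef ψ n q) = Ecoef ψ n q := by
        rw [← Ecoef_rho ι X ψ hψι hψX hfree ρ hρ0 hρ n q, hqρ]
      have h1 : cyclicDer D (X * Ecoef ψ n q)
          = ∑ k ∈ Finset.range (n + 1), (ρ ^ k) (Ecoef ψ n q) :=
        Phi_span ι X D hD hDX hDB ρ hρ0 hρ n _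
          (Ecoef_mem ι X ψ hψι hψX hfree n q)
      rw [h1, Finset.sum_congr rfl fun k _ => rho_fix_pow h2 k, Finset.sum_const,
        Finset.card_range, ← Nat.cast_smul_eq_nsmul ℂ, smul_smul]
      rw [show ((n + 1 : ℕ) : ℂ) = (n : ℂ) + 1 by push_cast; ring,
        inv_mul_cancel₀ (Nat.cast_add_one_ne_zero n), one_smul]
    rw [Finset.sum_congr rfl fun n _ => hterm n]
    have hev := eval_one_psi ι X ψ hψι hψX hfree q
    rw [Polynomial.eval_eq_sum, Polynomial.sum_def] at hev
    simpa [Ecoef_apply] using hev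
end
end

section
/- Let B⟨X⟩ be the free product of a unital ℂ-algebra B with ℂ⟨X⟩, ∂ = ∂_{X:B} the free difference quotient, and define the divergence ∂*[u] := u # X for u ∈ B⟨X⟩⊗B⟨X⟩ (where (a⊗c)#X = aXc). Then ∂∘∂* = (∂*⊗id)∘(id⊗∂) + (id⊗∂*)∘(∂⊗id) + id on B⟨X⟩⊗B⟨X⟩. -/
open scoped TensorProduct

noncomputable section
set_option synthInstance.maxHeartbeats 1000000
set_option maxHeartbeats 1000000

lemma divg_tmul {A : Type} [Ring A] [Algebra ℂ A] (X a c : A) :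
    divg X (a ⊗ₜ[ℂ] c) = a * X * c := by
  simp [divg, LinearMap.mul'_apply, Algebra.TensorProduct.tmul_mul_tmul, mul_assoc]

lemma aux1 {A : Type} [Ring A] [Algebra ℂ A] (X a : A) (u : A ⊗[ℂ] A) :
    LinearMap.rTensor A (divg X) ((TensorProduct.assoc ℂ A A A).symm (a ⊗ₜ[ℂ] u)) =
      ((a * X) ⊗ₜ[ℂ] (1 : A)) * u := by
  induction u using TensorProduct.induction_on with
  | zero => rw [TensorProduct.tmul_zero, map_zero, map_zero, mul_zero]
  | tmul x y => simp [divg_tmul, Algebra.TensorProduct.tmul_mul_tmul, mul_assoc]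
  | add x y hx hy => rw [TensorProduct.tmul_add, map_add, map_add, hx, hy, mul_add]

lemma aux2 {A : Type} [Ring A] [Algebra ℂ A] (X c : A) (u : A ⊗[ℂ] A) :
    LinearMap.lTensor A (divg X) ((TensorProduct.assoc ℂ A A A) (u ⊗ₜ[ℂ] c)) =
      u * ((1 : A) ⊗ₜ[ℂ] (X * c)) := by
  induction u using TensorProduct.induction_on with
  | zero => rw [TensorProduct.zero_tmul, map_zero, map_zero, zero_mul]
  | tmul x y => simp [divg_tmul, Algebra.TensorProduct.tmul_mul_tmul, mul_assoc]
  | add x y hx hy => rw [TensorProduct.add_tmul, map_add, map_add, hx, hy, add_mul]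

/-- The divergence identity on `B⟨X⟩⊗B⟨X⟩`:
`∂∘∂* = (∂*⊗id)∘(id⊗∂) + (id⊗∂*)∘(∂⊗id) + id`, where `∂*[u] = u # X`. -/
theorem diffQuot_comp_divergence
    {B A : Type} [Ring B] [Algebra ℂ B] [Ring A] [Algebra ℂ A]
    (ι : B →ₐ[ℂ] A) (X : A) (hfree : IsFreeProduct ι X)
    (D : A →ₗ[ℂ] A ⊗[ℂ] A)
    (hD : ∀ p q : A, D (p * q) = (p ⊗ₜ[ℂ] (1 : A)) * D q + D p * ((1 : A) ⊗ₜ[ℂ] q))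
    (hDX : D X = (1 : A) ⊗ₜ[ℂ] (1 : A))
    (hDB : ∀ b : B, D (ι b) = 0) :
    D ∘ₗ divg X =
      (LinearMap.rTensor A (divg X) ∘ₗ (TensorProduct.assoc ℂ A A A).symm.toLinearMap)
          ∘ₗ LinearMap.lTensor A D
        + LinearMap.lTensor A (divg X)
            ∘ₗ ((TensorProduct.assoc ℂ A A A).toLinearMap ∘ₗ LinearMap.rTensor A D)
        + LinearMap.id := by
  apply TensorProduct.ext'
  intro a c
  simp only [LinearMap.comp_apply, LinearMap.add_apply, LinearMap.id_apply,
    LinearMap.lTensor_tmul, LinearMap.rTensor_tmul, LinearEquiv.coe_coe,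
    divg_tmul]
  rw [mul_assoc, hD a (X * c), hD X c, hDX, aux1, aux2]
  simp only [mul_add, ← mul_assoc, Algebra.TensorProduct.tmul_mul_tmul, one_mul, mul_one]
  abel
end
end

section
/- Let B⟨X⟩, ∂, δ be as above, and define D* : B⟨X⟩ → B⟨X⟩ by D*[p] = pX, and the divergence ∂*[u] = u#X. Then δ∘D* = ∂*∘σ∘∂ + id on B⟨X⟩, where σ is the tensor flip. -/
open scoped TensorProduct

noncomputable section

/-- The cyclic divergence identity: `δ∘D* = ∂*∘σ∘∂ + id` on `B⟨X⟩`, where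
`D*[p] = pX`, `∂*[a⊗c] = aXc` and `σ` is the tensor flip. -/
theorem cyclicDer_comp_cyclicDivergence
    {B A : Type} [Ring B] [Algebra ℂ B] [Ring A] [Algebra ℂ A]
    (ι : B →ₐ[ℂ] A) (X : A) (hfree : IsFreeProduct ι X)
    (D : A →ₗ[ℂ] A ⊗[ℂ] A)
    (hD : ∀ p q : A, D (p * q) = (p ⊗ₜ[ℂ] (1 : A)) * D q + D p * ((1 : A) ⊗ₜ[ℂ] q))
    (hDX : D X = (1 : A) ⊗ₜ[ℂ] (1 : A))
    (hDB : ∀ b : B, D (ι b) = 0) :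
    cyclicDer D ∘ₗ LinearMap.mulRight ℂ X =
      divg X ∘ₗ (TensorProduct.comm ℂ A A).toLinearMap ∘ₗ D + LinearMap.id := by
  ext p
  simp only [LinearMap.comp_apply, LinearMap.add_apply, LinearMap.id_apply,
    LinearMap.mulRight_apply, cyclicDer, divg]
  rw [hD p X, hDX, map_add, map_add]
  simp only [LinearEquiv.coe_coe]
  have h1 : (LinearMap.mul' ℂ A)
      ((TensorProduct.comm ℂ A A) (p ⊗ₜ[ℂ] (1 : A) * (1 : A) ⊗ₜ[ℂ] (1 : A))) = p := by
    simp [Algebra.TensorProduct.tmul_mul_tmul]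
  rw [h1]
  have h2 : ∀ u : A ⊗[ℂ] A,
      (LinearMap.mul' ℂ A) ((TensorProduct.comm ℂ A A) (u * ((1 : A) ⊗ₜ[ℂ] X))) =
      (LinearMap.mul' ℂ A)
        ((TensorProduct.comm ℂ A A) u * (X ⊗ₜ[ℂ] (1 : A))) := by
    intro u
    induction u using TensorProduct.induction_on with
    | zero => simp
    | tmul a c => simp [Algebra.TensorProduct.tmul_mul_tmul, mul_assoc]
    | add x y hx hy => simp [add_mul, map_add, hx, hy]
  rw [h2, add_comm]
end
end

section
/- Let L = N + id be the grading operator on B⟨X⟩. Then L is a coderivation with respect to ∂: ∂∘L = (L⊗id + id⊗L)∘∂, where (L⊗id) = (N⊗id) + id and (id⊗L) = (id⊗N) + id on B⟨X⟩⊗B⟨X⟩. -/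
open scoped TensorProduct

noncomputable section

namespace GradingAux

variable {A : Type} [Ring A] [Algebra ℂ A]

lemma mul'_left (p : A) (u : A ⊗[ℂ] A) :
    LinearMap.mul' ℂ A ((p ⊗ₜ[ℂ] (1 : A)) * u) = p * LinearMap.mul' ℂ A u := by
  induction u using TensorProduct.induction_on with
  | zero => simp
  | tmul a c => simp [Algebra.TensorProduct.tmul_mul_tmul, mul_assoc]
  | add u v hu hv => simp only [mul_add, map_add, hu, hv]

lemma mul'_right (q : A) (u : A ⊗[ℂ] A) :
    LinearMap.mul' ℂ A (u * ((1 : A) ⊗ₜ[ℂ] q)) = LinearMap.mul' ℂ A u * q := by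
  induction u using TensorProduct.induction_on with
  | zero => simp
  | tmul a c => simp [Algebra.TensorProduct.tmul_mul_tmul, mul_assoc]
  | add u v hu hv => simp only [add_mul, map_add, hu, hv]

lemma divg_apply (X : A) (u : A ⊗[ℂ] A) :
    divg X u = LinearMap.mul' ℂ A (u * (X ⊗ₜ[ℂ] (1 : A))) := rfl

lemma divg_left (X p : A) (u : A ⊗[ℂ] A) :
    divg X ((p ⊗ₜ[ℂ] (1 : A)) * u) = p * divg X u := by
  rw [divg_apply, divg_apply, mul_assoc, mul'_left]

lemma divg_right (X q : A) (u : A ⊗[ℂ] A) :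
    divg X (u * ((1 : A) ⊗ₜ[ℂ] q)) = divg X u * q := by
  rw [divg_apply, divg_apply, mul_assoc]
  have : ((1 : A) ⊗ₜ[ℂ] q) * (X ⊗ₜ[ℂ] (1 : A)) = (X ⊗ₜ[ℂ] (1 : A)) * ((1 : A) ⊗ₜ[ℂ] q) := by
    simp [Algebra.TensorProduct.tmul_mul_tmul]
  rw [this, ← mul_assoc, mul'_right]

section deriv

variable (N : A →ₗ[ℂ] A) (hN : ∀ p q : A, N (p * q) = p * N q + N p * q)

include hN

lemma rTensor_left (p : A) (u : A ⊗[ℂ] A) :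
    LinearMap.rTensor A N ((p ⊗ₜ[ℂ] (1 : A)) * u) =
      (N p ⊗ₜ[ℂ] (1 : A)) * u + (p ⊗ₜ[ℂ] (1 : A)) * LinearMap.rTensor A N u := by
  induction u using TensorProduct.induction_on with
  | zero => simp
  | tmul a c =>
      simp only [Algebra.TensorProduct.tmul_mul_tmul, hN p a, TensorProduct.add_tmul,
        LinearMap.rTensor_tmul, one_mul, mul_one]
      abel
  | add u v hu hv =>
      simp only [mul_add, map_add, hu, hv]; abel

lemma rTensor_right (q : A) (u : A ⊗[ℂ] A) :
    LinearMap.rTensor A N (u * ((1 : A) ⊗ₜ[ℂ] q)) =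
      LinearMap.rTensor A N u * ((1 : A) ⊗ₜ[ℂ] q) := by
  induction u using TensorProduct.induction_on with
  | zero => simp
  | tmul a c => simp [Algebra.TensorProduct.tmul_mul_tmul]
  | add u v hu hv => simp only [add_mul, map_add, hu, hv]

lemma lTensor_left (p : A) (u : A ⊗[ℂ] A) :
    LinearMap.lTensor A N ((p ⊗ₜ[ℂ] (1 : A)) * u) =
      (p ⊗ₜ[ℂ] (1 : A)) * LinearMap.lTensor A N u := by
  induction u using TensorProduct.induction_on with
  | zero => simp
  | tmul a c => simp [Algebra.TensorProduct.tmul_mul_tmul]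
  | add u v hu hv => simp only [mul_add, map_add, hu, hv]

lemma lTensor_right (q : A) (u : A ⊗[ℂ] A) :
    LinearMap.lTensor A N (u * ((1 : A) ⊗ₜ[ℂ] q)) =
      u * ((1 : A) ⊗ₜ[ℂ] N q) + LinearMap.lTensor A N u * ((1 : A) ⊗ₜ[ℂ] q) := by
  induction u using TensorProduct.induction_on with
  | zero => simp
  | tmul a c =>
      simp [Algebra.TensorProduct.tmul_mul_tmul, hN c q, TensorProduct.tmul_add]
  | add u v hu hv =>
      simp only [add_mul, map_add, hu, hv]; abel

end deriv

section Dlem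

variable (X : A) (D : A →ₗ[ℂ] A ⊗[ℂ] A)
  (hD : ∀ p q : A, D (p * q) = (p ⊗ₜ[ℂ] (1 : A)) * D q + D p * ((1 : A) ⊗ₜ[ℂ] q))

include hD

lemma D_one : D (1 : A) = 0 := by
  have h := hD 1 1
  rw [mul_one, ← Algebra.TensorProduct.one_def, one_mul, mul_one] at h
  have h2 : D (1 : A) + 0 = D 1 + D 1 := by simpa using h
  exact (add_left_cancel h2).symm

lemma D_algebraMap (r : ℂ) : D (algebraMap ℂ A r) = 0 := by
  rw [Algebra.algebraMap_eq_smul_one, map_smul, D_one D hD, smul_zero]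

lemma N_mul (p q : A) :
    numOp X D (p * q) = p * numOp X D q + numOp X D p * q := by
  simp only [numOp, LinearMap.comp_apply, hD p q, map_add, divg_left, divg_right]

lemma N_one : numOp X D (1 : A) = 0 := by
  simp [numOp, D_one D hD]

end Dlem

lemma adjoin_eq_top {B : Type} [Ring B] [Algebra ℂ B]
    (ι : B →ₐ[ℂ] A) (X : A) (hfree : IsFreeProduct ι X) :
    Algebra.adjoin ℂ (Set.range ι ∪ {X}) = ⊤ := by
  set S := Algebra.adjoin ℂ (Set.range ι ∪ {X}) with hS
  have hιS : ∀ b, ι b ∈ S := fun b => Algebra.subset_adjoin (Or.inl ⟨b, rfl⟩)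
  have hXS : X ∈ S := Algebra.subset_adjoin (Or.inr rfl)
  obtain ⟨ψ, ⟨hψι, hψX⟩, _⟩ := hfree S (ι.codRestrict S hιS) ⟨X, hXS⟩
  obtain ⟨χ, _, huniq⟩ := hfree A ι X
  have h1 : S.val.comp ψ = χ := by
    refine huniq _ ⟨?_, ?_⟩
    · ext b
      have : ψ (ι b) = (ι.codRestrict S hιS) b := by
        rw [← AlgHom.comp_apply, hψι]
      simp [this]
    · simp [hψX]
  have h2 : AlgHom.id ℂ A = χ := huniq _ ⟨by ext b; simp, rfl⟩
  rw [eq_top_iff]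
  intro a _
  have : S.val (ψ a) = a := by
    rw [show S.val (ψ a) = (S.val.comp ψ) a from rfl, h1, ← h2]; rfl
  rw [← this]
  exact (ψ a).2

end GradingAux

/-- The grading operator `L = N + id` is a coderivation with respect to `∂`:
`∂∘L = (L⊗id + id⊗L)∘∂`, with `L⊗id = N⊗id + id` and `id⊗L = id⊗N + id`. -/
theorem gradingOp_coderivation
    {B A : Type} [Ring B] [Algebra ℂ B] [Ring A] [Algebra ℂ A]
    (ι : B →ₐ[ℂ] A) (X : A) (hfree : IsFreeProduct ι X)
    (D : A →ₗ[ℂ] A ⊗[ℂ] A)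
    (hD : ∀ p q : A, D (p * q) = (p ⊗ₜ[ℂ] (1 : A)) * D q + D p * ((1 : A) ⊗ₜ[ℂ] q))
    (hDX : D X = (1 : A) ⊗ₜ[ℂ] (1 : A))
    (hDB : ∀ b : B, D (ι b) = 0) :
    D ∘ₗ (numOp X D + (LinearMap.id : A →ₗ[ℂ] A)) =
      ((LinearMap.rTensor A (numOp X D) + (LinearMap.id : A ⊗[ℂ] A →ₗ[ℂ] A ⊗[ℂ] A))
        + (LinearMap.lTensor A (numOp X D)
            + (LinearMap.id : A ⊗[ℂ] A →ₗ[ℂ] A ⊗[ℂ] A))) ∘ₗ D := by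
  set N := numOp X D with hNdef
  have hN : ∀ p q : A, N (p * q) = p * N q + N p * q := GradingAux.N_mul X D hD
  -- the key pointwise identity
  have key : ∀ p : A, D (N p) =
      LinearMap.rTensor A N (D p) + LinearMap.lTensor A N (D p) + D p := by
    intro p
    have hp : p ∈ Algebra.adjoin ℂ (Set.range ι ∪ {X}) := by
      rw [GradingAux.adjoin_eq_top ι X hfree]; trivial
    induction hp using Algebra.adjoin_induction with
    | mem x hx =>
        rcases hx with ⟨b, rfl⟩ | hx
        · have hDb : D (ι b) = 0 := hDB b
          have : N (ι b) = 0 := by simp [hNdef, numOp, hDb]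
          simp [this, hDb]
        · rw [show x = X from hx]
          have hNX : N X = X := by
            simp [hNdef, numOp, hDX, GradingAux.divg_apply,
              Algebra.TensorProduct.tmul_mul_tmul]
          have hN1 : N (1 : A) = 0 := GradingAux.N_one X D hD
          simp [hNX, hDX, hN1]
    | algebraMap r =>
        have h0 : D (algebraMap ℂ A r) = 0 := GradingAux.D_algebraMap D hD r
        have : N (algebraMap ℂ A r) = 0 := by simp [hNdef, numOp, h0]
        simp [this, h0]
    | add x y hx hy ihx ihy =>
        simp only [map_add, ihx, ihy]; abel
    | mul p q hp hq ihp ihq =>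
        rw [hN p q, map_add, hD p (N q), hD (N p) q, ihp, ihq, hD p q]
        rw [map_add (LinearMap.rTensor A N), map_add (LinearMap.lTensor A N),
          GradingAux.rTensor_left N hN, GradingAux.rTensor_right N hN,
          GradingAux.lTensor_left N hN, GradingAux.lTensor_right N hN]
        simp only [mul_add, add_mul]
        abel
  ext p
  simp only [LinearMap.comp_apply, LinearMap.add_apply, LinearMap.id_apply, map_add, key p]
  abel
end
end

section
/- Poincaré lemma for cyclic derivatives on B⟨X⟩: for p ∈ B⟨X⟩ the following are equivalent: (1) there exists q ∈ B⟨X⟩ with δ[q] = p; (2) ∂[p] = σ(∂[p]); (3) δ[D*[p]] = L[p], where D*[p] = pX and L = N + id. -/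
open scoped TensorProduct

noncomputable section

set_option maxHeartbeats 1000000
set_option synthInstance.maxHeartbeats 400000

namespace PoincareAux

open TensorProduct

section Basic


variable {A : Type} [Ring A] [Algebra ℂ A]

lemma muσ_left (a : A) (u : A ⊗[ℂ] A) :
    LinearMap.mul' ℂ A ((TensorProduct.comm ℂ A A) ((a ⊗ₜ[ℂ] (1:A)) * u)) =
      LinearMap.mul' ℂ A ((TensorProduct.comm ℂ A A) u * (a ⊗ₜ[ℂ] (1:A))) := by
  induction u using TensorProduct.induction_on with
  | zero => simp
  | tmul x y => simp [Algebra.TensorProduct.tmul_mul_tmul, mul_assoc]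
  | add x y hx hy => simp only [mul_add, add_mul, map_add, hx, hy]

lemma muσ_right (b : A) (u : A ⊗[ℂ] A) :
    LinearMap.mul' ℂ A ((TensorProduct.comm ℂ A A) (u * ((1:A) ⊗ₜ[ℂ] b))) =
      LinearMap.mul' ℂ A ((TensorProduct.comm ℂ A A) u * (b ⊗ₜ[ℂ] (1:A))) := by
  induction u using TensorProduct.induction_on with
  | zero => simp
  | tmul x y => simp [Algebra.TensorProduct.tmul_mul_tmul, mul_assoc]
  | add x y hx hy => simp only [mul_add, add_mul, map_add, hx, hy]

lemma mu_left (a : A) (u : A ⊗[ℂ] A) :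
    LinearMap.mul' ℂ A ((a ⊗ₜ[ℂ] (1:A)) * u) = a * LinearMap.mul' ℂ A u := by
  induction u using TensorProduct.induction_on with
  | zero => simp
  | tmul x y => simp [Algebra.TensorProduct.tmul_mul_tmul, mul_assoc]
  | add x y hx hy => simp only [mul_add, add_mul, map_add, hx, hy]

variable (D : A →ₗ[ℂ] A ⊗[ℂ] A)

lemma cyclicDer_apply (p : A) :
    cyclicDer D p = LinearMap.mul' ℂ A ((TensorProduct.comm ℂ A A) (D p)) := rfl

lemma divg_apply (X : A) (u : A ⊗[ℂ] A) :
    divg X u = LinearMap.mul' ℂ A (u * (X ⊗ₜ[ℂ] (1:A))) := rfl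

lemma numOp_apply (X : A) (p : A) : numOp X D p = divg X (D p) := rfl

variable (hD : ∀ p q : A, D (p * q) = (p ⊗ₜ[ℂ] (1 : A)) * D q + D p * ((1 : A) ⊗ₜ[ℂ] q))

include hD

lemma D_one : D 1 = 0 := by
  have h := hD 1 1
  rw [mul_one, ← Algebra.TensorProduct.one_def, one_mul, mul_one] at h
  exact (left_eq_add.mp h)

lemma trace_mul (a b : A) : cyclicDer D (a * b) = cyclicDer D (b * a) := by
  rw [cyclicDer_apply, cyclicDer_apply, hD, hD, map_add, map_add, map_add, map_add,
    muσ_left, muσ_right, muσ_left, muσ_right, add_comm]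

lemma delta_mu_X (X : A) (u : A ⊗[ℂ] A) :
    cyclicDer D (LinearMap.mul' ℂ A ((TensorProduct.comm ℂ A A) u) * X) =
      cyclicDer D (LinearMap.mul' ℂ A (u * (X ⊗ₜ[ℂ] (1:A)))) := by
  induction u using TensorProduct.induction_on with
  | zero => simp
  | tmul x y =>
    simp only [comm_tmul, LinearMap.mul'_apply, Algebra.TensorProduct.tmul_mul_tmul, mul_one]
    rw [mul_assoc, trace_mul D hD]
  | add x y hx hy => simp only [map_add, add_mul, hx, hy]

lemma delta_delta_X (X : A) (q : A) :
    cyclicDer D (cyclicDer D q * X) = cyclicDer D (numOp X D q) := by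
  simpa only [cyclicDer_apply, numOp_apply, divg_apply] using delta_mu_X D hD X (D q)


end Basic

section Mono


variable {B A : Type} [Ring B] [Algebra ℂ B] [Ring A] [Algebra ℂ A]
variable (ι : B →ₐ[ℂ] A) (X : A)

lemma mono_nil (b0 : B) : mono ι X b0 [] = ι b0 := by simp [mono]

lemma mono_cons (b0 b : B) (bs : List B) :
    mono ι X b0 (b :: bs) = ι b0 * (X * mono ι X b bs) := by
  simp [mono, mul_assoc]

lemma mono_X : mono ι X 1 [1] = X := by simp [mono]

lemma mono_mul_X (b0 : B) (bs : List B) :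
    mono ι X b0 bs * X = mono ι X b0 (bs ++ [(1 : B)]) := by
  simp [mono, mul_assoc]

lemma mono_mul (c0 : B) (cs : List B) :
    ∀ (bs : List B) (b0 : B), ∃ d0 ds, ds.length = bs.length + cs.length ∧
      mono ι X b0 bs * mono ι X c0 cs = mono ι X d0 ds := by
  intro bs
  induction bs with
  | nil =>
    intro b0
    exact ⟨b0 * c0, cs, by simp, by simp [mono, map_mul, mul_assoc]⟩
  | cons b bs ih =>
    intro b0
    obtain ⟨d0, ds, hlen, heq⟩ := ih b
    refine ⟨b0, d0 :: ds, by simp [hlen]; omega, ?_⟩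
    rw [mono_cons, mono_cons, mul_assoc, mul_assoc, ← heq]

/-- span of all monomials -/
def Smon : Submodule ℂ A := Submodule.span ℂ {a | ∃ b0 bs, a = mono ι X b0 bs}

/-- span of monomials of degree `n` -/
def Sdeg (n : ℕ) : Submodule ℂ A :=
  Submodule.span ℂ {a | ∃ b0 bs, bs.length = n ∧ a = mono ι X b0 bs}

/-- span of monomials of degree `≤ k` -/
def Sle (k : ℕ) : Submodule ℂ A :=
  Submodule.span ℂ {a | ∃ b0 bs, bs.length ≤ k ∧ a = mono ι X b0 bs}

/-- span of pairs of monomials of total degree `n` -/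
def Tdeg (n : ℕ) : Submodule ℂ (A ⊗[ℂ] A) :=
  Submodule.span ℂ {u | ∃ b0 bs c0 cs, bs.length + cs.length = n ∧
    u = mono ι X b0 bs ⊗ₜ[ℂ] mono ι X c0 cs}

lemma adjoin_eq_top (hfree : IsFreeProduct ι X) :
    Algebra.adjoin ℂ (Set.range ι ∪ {X}) = ⊤ := by
  set C := Algebra.adjoin ℂ (Set.range ι ∪ {X}) with hC
  have hXC : X ∈ C := Algebra.subset_adjoin (by simp)
  have hι : ∀ b, ι b ∈ C := fun b => Algebra.subset_adjoin (Or.inl ⟨b, rfl⟩)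
  obtain ⟨ψ, ⟨hψι, hψX⟩, -⟩ := hfree C (ι.codRestrict C hι) ⟨X, hXC⟩
  obtain ⟨χ, -, huniq⟩ := hfree A ι X
  have h1 : C.val.comp ψ = χ := by
    refine huniq _ ⟨?_, ?_⟩
    · ext b
      have : ψ (ι b) = ι.codRestrict C hι b := by
        rw [← AlgHom.comp_apply, hψι]
      simp [AlgHom.comp_apply, this]
    · simp [AlgHom.comp_apply, hψX]
  have h2 : AlgHom.id ℂ A = χ := huniq _ ⟨by ext b; simp, by simp⟩
  rw [eq_top_iff]
  intro a _
  have : C.val (ψ a) = a := by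
    rw [show C.val (ψ a) = (C.val.comp ψ) a from rfl, h1, ← h2]; rfl
  exact this ▸ (ψ a).2

lemma smon_mul_mem {a b : A} (ha : a ∈ Smon ι X) (hb : b ∈ Smon ι X) :
    a * b ∈ Smon ι X := by
  have aux : ∀ y ∈ Smon ι X, ∀ (b0 : B) (bs : List B), mono ι X b0 bs * y ∈ Smon ι X := by
    intro y hy
    induction hy using Submodule.span_induction with
    | mem y hy =>
      intro b0 bs
      obtain ⟨c0, cs, rfl⟩ := hy
      obtain ⟨d0, ds, -, heq⟩ := mono_mul ι X c0 cs bs b0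
      exact heq ▸ Submodule.subset_span ⟨d0, ds, rfl⟩
    | zero => intro b0 bs; simp
    | add y z _ _ h1 h2 => intro b0 bs; rw [mul_add]; exact add_mem (h1 b0 bs) (h2 b0 bs)
    | smul c y _ h1 => intro b0 bs; rw [mul_smul_comm]; exact Submodule.smul_mem _ _ (h1 b0 bs)
  induction ha using Submodule.span_induction with
  | mem x hx => obtain ⟨b0, bs, rfl⟩ := hx; exact aux b hb b0 bs
  | zero => simp
  | add x y _ _ h1 h2 => rw [add_mul]; exact add_mem h1 h2
  | smul c x _ h1 => rw [smul_mul_assoc]; exact Submodule.smul_mem _ _ h1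

lemma smon_top (hfree : IsFreeProduct ι X) : Smon ι X = ⊤ := by
  rw [eq_top_iff]
  rintro a -
  have ha : a ∈ Algebra.adjoin ℂ (Set.range ι ∪ {X}) := by
    rw [adjoin_eq_top ι X hfree]; trivial
  induction ha using Algebra.adjoin_induction with
  | mem x hx =>
    rcases hx with ⟨b, rfl⟩ | rfl
    · exact Submodule.subset_span ⟨b, [], (mono_nil ι X b).symm⟩
    · exact Submodule.subset_span ⟨1, [1], (mono_X _ _).symm⟩
  | algebraMap r =>
    rw [Algebra.algebraMap_eq_smul_one]
    refine Submodule.smul_mem _ _ (Submodule.subset_span ⟨1, [], ?_⟩)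
    simp [mono_nil]
  | add x y _ _ h1 h2 => exact add_mem h1 h2
  | mul x y _ _ h1 h2 => exact smon_mul_mem ι X h1 h2


end Mono

section Grading

variable {B A : Type} [Ring B] [Algebra ℂ B] [Ring A] [Algebra ℂ A]
variable (ι : B →ₐ[ℂ] A) (X : A) (D : A →ₗ[ℂ] A ⊗[ℂ] A)
variable (hD : ∀ p q : A, D (p * q) = (p ⊗ₜ[ℂ] (1 : A)) * D q + D p * ((1 : A) ⊗ₜ[ℂ] q))
variable (hDX : D X = (1 : A) ⊗ₜ[ℂ] (1 : A))
variable (hDB : ∀ b : B, D (ι b) = 0)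

include hD hDX hDB in
lemma D_mono_cons (b0 b : B) (bs : List B) :
    D (mono ι X b0 (b :: bs)) =
      ((ι b0 * X) ⊗ₜ[ℂ] (1:A)) * D (mono ι X b bs) + (ι b0) ⊗ₜ[ℂ] (mono ι X b bs) := by
  rw [mono_cons, hD (ι b0) (X * mono ι X b bs), hDB, hD X (mono ι X b bs), hDX, zero_mul,
    add_zero, mul_add, ← mul_assoc]
  simp [Algebra.TensorProduct.tmul_mul_tmul]

include hDB in
lemma D_mono_nil (b0 : B) : D (mono ι X b0 []) = 0 := by
  rw [mono_nil]; exact hDB b0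

lemma tdeg_mul_left {n : ℕ} (b0 : B) {u : A ⊗[ℂ] A} (hu : u ∈ Tdeg ι X n) :
    ((ι b0 * X) ⊗ₜ[ℂ] (1:A)) * u ∈ Tdeg ι X (n + 1) := by
  induction hu using Submodule.span_induction with
  | mem u hu =>
    obtain ⟨c0, cs, d0, ds, hlen, rfl⟩ := hu
    refine Submodule.subset_span ⟨b0, c0 :: cs, d0, ds, by simp [← hlen]; omega, ?_⟩
    simp [Algebra.TensorProduct.tmul_mul_tmul, mono_cons, mul_assoc]
  | zero => simp
  | add x y _ _ h1 h2 => rw [mul_add]; exact add_mem h1 h2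
  | smul c x _ h1 => rw [mul_smul_comm]; exact Submodule.smul_mem _ _ h1

include hD hDX hDB in
lemma D_mono_mem : ∀ (bs : List B) (b0 : B),
    D (mono ι X b0 bs) ∈ Tdeg ι X (bs.length - 1) := by
  intro bs
  induction bs with
  | nil => intro b0; rw [D_mono_nil ι X D hDB]; exact zero_mem _
  | cons b bs ih =>
    intro b0
    rw [D_mono_cons ι X D hD hDX hDB]
    refine add_mem ?_ (Submodule.subset_span ⟨b0, [], b, bs, by simp, by rw [mono_nil]⟩)
    rcases bs with _ | ⟨c, cs⟩
    · rw [D_mono_nil ι X D hDB, mul_zero]; exact zero_mem _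
    · have := tdeg_mul_left ι X b0 (ih b)
      simpa using this

lemma mu_sigma_T {n : ℕ} {u : A ⊗[ℂ] A} (hu : u ∈ Tdeg ι X n) :
    LinearMap.mul' ℂ A ((TensorProduct.comm ℂ A A) u) ∈ Sdeg ι X n := by
  induction hu using Submodule.span_induction with
  | mem u hu =>
    obtain ⟨b0, bs, c0, cs, hlen, rfl⟩ := hu
    rw [TensorProduct.comm_tmul, LinearMap.mul'_apply]
    obtain ⟨d0, ds, hl, heq⟩ := mono_mul ι X b0 bs cs c0
    rw [heq]
    exact Submodule.subset_span ⟨d0, ds, by omega, rfl⟩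
  | zero => simp
  | add x y _ _ h1 h2 => rw [map_add, map_add]; exact add_mem h1 h2
  | smul c x _ h1 => rw [map_smul, map_smul]; exact Submodule.smul_mem _ _ h1

include hD hDX hDB in
lemma delta_mono_mem (b0 : B) (bs : List B) :
    cyclicDer D (mono ι X b0 bs) ∈ Sdeg ι X (bs.length - 1) := by
  rw [cyclicDer_apply]
  exact mu_sigma_T ι X (D_mono_mem ι X D hD hDX hDB bs b0)

include hD hDX hDB in
lemma N_mono : ∀ (bs : List B) (b0 : B),
    numOp X D (mono ι X b0 bs) = (bs.length : ℂ) • mono ι X b0 bs := by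
  intro bs
  induction bs with
  | nil => intro b0; rw [numOp_apply, D_mono_nil ι X D hDB, map_zero]; simp
  | cons b bs ih =>
    intro b0
    rw [numOp_apply, D_mono_cons ι X D hD hDX hDB, map_add]
    have h1 : divg X (((ι b0 * X) ⊗ₜ[ℂ] (1:A)) * D (mono ι X b bs))
        = (ι b0 * X) * numOp X D (mono ι X b bs) := by
      rw [divg_apply, numOp_apply, divg_apply, mul_assoc, mu_left]
    have h2 : divg X ((ι b0) ⊗ₜ[ℂ] (mono ι X b bs)) = ι b0 * (X * mono ι X b bs) := by
      rw [divg_apply, Algebra.TensorProduct.tmul_mul_tmul, mul_one, LinearMap.mul'_apply,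
        mul_assoc]
    rw [h1, h2, ih b, mono_cons, mul_smul_comm, mul_assoc]
    simp only [List.length_cons, Nat.cast_add, Nat.cast_one, add_smul, one_smul]

include hD hDX hDB in
lemma N_eig {n : ℕ} {p : A} (hp : p ∈ Sdeg ι X n) :
    numOp X D p = (n : ℂ) • p := by
  induction hp using Submodule.span_induction with
  | mem x hx => obtain ⟨b0, bs, hlen, rfl⟩ := hx; rw [N_mono ι X D hD hDX hDB, hlen]
  | zero => simp
  | add x y _ _ h1 h2 => rw [map_add, h1, h2, smul_add]
  | smul c x _ h1 => rw [map_smul, h1, smul_comm]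

include hD hDX hDB in
lemma euler (hfree : IsFreeProduct ι X) (p : A) :
    cyclicDer D (numOp X D p) = numOp X D (cyclicDer D p) + cyclicDer D p := by
  have hp : p ∈ Smon ι X := by rw [smon_top ι X hfree]; trivial
  induction hp using Submodule.span_induction with
  | mem x hx =>
    obtain ⟨b0, bs, rfl⟩ := hx
    rcases bs with _ | ⟨b, bs⟩
    · rw [numOp_apply, D_mono_nil ι X D hDB, map_zero, map_zero, cyclicDer_apply,
        D_mono_nil ι X D hDB]
      simp
    · rw [N_mono ι X D hD hDX hDB, map_smul]
      have hδ : cyclicDer D (mono ι X b0 (b :: bs)) ∈ Sdeg ι X bs.length := by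
        simpa using delta_mono_mem ι X D hD hDX hDB b0 (b :: bs)
      rw [N_eig ι X D hD hDX hDB hδ]
      simp only [List.length_cons, Nat.cast_add, Nat.cast_one, add_smul, one_smul]
  | zero => simp
  | add x y _ _ h1 h2 => rw [map_add, map_add, map_add, map_add, h1, h2]; abel
  | smul c x _ h1 => rw [map_smul, map_smul, map_smul, map_smul, h1, smul_add]

include hD hDX hDB in
lemma thetaN (hfree : IsFreeProduct ι X) (p : A) :
    cyclicDer D (numOp X D p * X) = numOp X D (cyclicDer D (p * X)) := by
  have hp : p ∈ Smon ι X := by rw [smon_top ι X hfree]; trivial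
  induction hp using Submodule.span_induction with
  | mem x hx =>
    obtain ⟨b0, bs, rfl⟩ := hx
    rw [N_mono ι X D hD hDX hDB, smul_mul_assoc, map_smul, mono_mul_X]
    have hδ : cyclicDer D (mono ι X b0 (bs ++ [(1:B)])) ∈ Sdeg ι X bs.length := by
      simpa using delta_mono_mem ι X D hD hDX hDB b0 (bs ++ [(1:B)])
    rw [N_eig ι X D hD hDX hDB hδ]
  | zero => simp
  | add x y _ _ h1 h2 => simp only [map_add, add_mul, h1, h2]
  | smul c x _ h1 => simp only [map_smul, smul_mul_assoc, h1]

end Grading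


section Inversion

variable {B A : Type} [Ring B] [Algebra ℂ B] [Ring A] [Algebra ℂ A]
variable (ι : B →ₐ[ℂ] A) (X : A) (D : A →ₗ[ℂ] A ⊗[ℂ] A)

lemma pow_eig (T : A →ₗ[ℂ] A) (m : A) (c : ℂ) (h : T m = c • m) :
    ∀ n : ℕ, (T ^ n) m = c ^ n • m := by
  intro n
  induction n with
  | zero => simp
  | succ n ih =>
    rw [pow_succ, Module.End.mul_apply, h, map_smul, ih, smul_smul, pow_succ, mul_comm]

lemma aeval_eig (T : A →ₗ[ℂ] A) (m : A) (c : ℂ) (h : T m = c • m) (f : Polynomial ℂ) :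
    (Polynomial.aeval T f) m = f.eval c • m := by
  induction f using Polynomial.induction_on' with
  | add p q hp hq => simp only [map_add, LinearMap.add_apply, hp, hq, Polynomial.eval_add,
      add_smul]
  | monomial n a =>
    rw [Polynomial.aeval_monomial, Polynomial.eval_monomial, Module.End.mul_apply,
      pow_eig T m c h n, map_smul, Module.algebraMap_end_apply, smul_smul, mul_comm]

lemma comm_aeval (T S : A →ₗ[ℂ] A) (hcomm : ∀ m, S (T m) = T (S m)) (f : Polynomial ℂ)
    (m : A) : S ((Polynomial.aeval T f) m) = (Polynomial.aeval T f) (S m) := by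
  have hpow : ∀ (n : ℕ) (m : A), S ((T ^ n) m) = (T ^ n) (S m) := by
    intro n
    induction n with
    | zero => intro m; simp
    | succ n ih => intro m; rw [pow_succ, Module.End.mul_apply, Module.End.mul_apply, ih, hcomm]
  induction f using Polynomial.induction_on' with
  | add p q hp hq => simp only [map_add, LinearMap.add_apply, hp, hq]
  | monomial n a =>
    rw [Polynomial.aeval_monomial, Module.End.mul_apply, Module.End.mul_apply,
      Module.algebraMap_end_apply, Module.algebraMap_end_apply, map_smul, hpow]

lemma sle_mono : Monotone (Sle ι X) := by
  intro j k hjk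
  apply Submodule.span_mono
  rintro a ⟨b0, bs, hlen, rfl⟩
  exact ⟨b0, bs, le_trans hlen hjk, rfl⟩

lemma mem_sle (hfree : IsFreeProduct ι X) (p : A) : ∃ k, p ∈ Sle ι X k := by
  have h1 : p ∈ ⨆ k, Sle ι X k := by
    have h2 : Smon ι X ≤ ⨆ k, Sle ι X k := by
      rw [Smon, Submodule.span_le]
      rintro a ⟨b0, bs, rfl⟩
      exact Submodule.mem_iSup_of_mem bs.length
        (Submodule.subset_span ⟨b0, bs, le_refl _, rfl⟩)
    apply h2
    rw [smon_top ι X hfree]; trivial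
  rwa [Submodule.mem_iSup_of_directed _ (sle_mono ι X).directed_le] at h1

variable (hD : ∀ p q : A, D (p * q) = (p ⊗ₜ[ℂ] (1 : A)) * D q + D p * ((1 : A) ⊗ₜ[ℂ] q))
variable (hDX : D X = (1 : A) ⊗ₜ[ℂ] (1 : A))
variable (hDB : ∀ b : B, D (ι b) = 0)

/-- the interpolation polynomial with `f(n) = 1/(n+1)` for `n ≤ k`. -/
def invPoly (k : ℕ) : Polynomial ℂ :=
  Lagrange.interpolate (Finset.range (k + 1)) (fun n : ℕ => (n : ℂ))
    (fun n : ℕ => ((n : ℂ) + 1)⁻¹)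

lemma invPoly_eval {k n : ℕ} (hn : n ≤ k) :
    (invPoly k).eval (n : ℂ) = ((n : ℂ) + 1)⁻¹ := by
  have hinj : Set.InjOn (fun n : ℕ => (n : ℂ)) (Finset.range (k + 1)) :=
    fun a _ b _ h => Nat.cast_injective h
  exact Lagrange.eval_interpolate_at_node _ hinj (Finset.mem_range.mpr (by omega))

include hD hDX hDB in
lemma aeval_inv {k : ℕ} {p : A} (hp : p ∈ Sle ι X k) :
    (Polynomial.aeval (numOp X D) (invPoly k)) (numOp X D p + p) = p := by
  induction hp using Submodule.span_induction with
  | mem x hx =>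
    obtain ⟨b0, bs, hlen, rfl⟩ := hx
    rw [N_mono ι X D hD hDX hDB]
    have heig := N_mono ι X D hD hDX hDB bs b0
    rw [show ((bs.length : ℂ) • mono ι X b0 bs + mono ι X b0 bs)
        = ((bs.length : ℂ) + 1) • mono ι X b0 bs by rw [add_smul, one_smul],
      map_smul, aeval_eig _ _ _ heig, invPoly_eval hlen, smul_smul,
      mul_inv_cancel₀ (Nat.cast_add_one_ne_zero bs.length), one_smul]
  | zero => simp
  | add x y _ _ h1 h2 =>
    have hh : (numOp X D) (x + y) + (x + y) = ((numOp X D) x + x) + ((numOp X D) y + y) := by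
      rw [map_add]; abel
    rw [hh, map_add, h1, h2]
  | smul c x _ h1 =>
    rw [show (numOp X D) (c • x) + c • x = c • ((numOp X D) x + x) by
      rw [map_smul, smul_add], map_smul, h1]

end Inversion

section Symm

variable {A : Type} [Ring A] [Algebra ℂ A]

/-- the map `(x ⊗ y) ⊗ z ↦ (z * x) ⊗ y`. -/
def alpha0 : (A ⊗[ℂ] A) ⊗[ℂ] A →ₗ[ℂ] A ⊗[ℂ] A :=
  (TensorProduct.map (LinearMap.mul' ℂ A) LinearMap.id) ∘ₗ
    ((TensorProduct.assoc ℂ A A A).symm.toLinearMap ∘ₗ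
      (TensorProduct.comm ℂ (A ⊗[ℂ] A) A).toLinearMap)

lemma alpha0_tmul (a b z : A) :
    alpha0 ((a ⊗ₜ[ℂ] b) ⊗ₜ[ℂ] z) = (z * a) ⊗ₜ[ℂ] b := by
  simp [alpha0]

lemma comm_comm (w : A ⊗[ℂ] A) :
    (TensorProduct.comm ℂ A A) ((TensorProduct.comm ℂ A A) w) = w := by
  induction w using TensorProduct.induction_on with
  | zero => simp
  | tmul x y => simp
  | add x y hx hy => simp [map_add, hx, hy]

lemma alphaA1 (w : A ⊗[ℂ] A) (z : A) :
    alpha0 (w ⊗ₜ[ℂ] z) = (z ⊗ₜ[ℂ] (1:A)) * w := by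
  induction w using TensorProduct.induction_on with
  | zero => simp
  | tmul a b => rw [alpha0_tmul, Algebra.TensorProduct.tmul_mul_tmul, one_mul]
  | add x y hx hy => rw [TensorProduct.add_tmul, map_add, hx, hy, mul_add]

lemma alphaA2 (w : A ⊗[ℂ] A) (z : A) :
    (TensorProduct.comm ℂ A A) (alpha0 ((TensorProduct.assoc ℂ A A A).symm (z ⊗ₜ[ℂ] w)))
      = w * ((1:A) ⊗ₜ[ℂ] z) := by
  induction w using TensorProduct.induction_on with
  | zero => simp
  | tmul a b =>
    rw [TensorProduct.assoc_symm_tmul, alpha0_tmul, TensorProduct.comm_tmul,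
      Algebra.TensorProduct.tmul_mul_tmul, mul_one]
  | add x y hx hy => rw [TensorProduct.tmul_add, map_add, map_add, map_add, hx, hy, add_mul]

variable (D : A →ₗ[ℂ] A ⊗[ℂ] A)

lemma D_mu_comm (hD : ∀ p q : A, D (p * q) = (p ⊗ₜ[ℂ] (1 : A)) * D q + D p * ((1 : A) ⊗ₜ[ℂ] q))
    (u : A ⊗[ℂ] A) :
    D (LinearMap.mul' ℂ A ((TensorProduct.comm ℂ A A) u)) =
      alpha0 ((TensorProduct.map D LinearMap.id) u) +
        (TensorProduct.comm ℂ A A)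
          (alpha0 ((TensorProduct.assoc ℂ A A A).symm
            ((TensorProduct.map LinearMap.id D) u))) := by
  induction u using TensorProduct.induction_on with
  | zero => simp
  | tmul x y =>
    simp only [TensorProduct.comm_tmul, LinearMap.mul'_apply, TensorProduct.map_tmul,
      LinearMap.id_coe, id_eq]
    rw [hD, alphaA1, alphaA2]
  | add x y hx hy =>
    simp only [map_add, hx, hy]
    abel

/-- `Φ₀ = assoc ∘ (D ⊗ id)` -/
def Phi0 : A ⊗[ℂ] A →ₗ[ℂ] A ⊗[ℂ] (A ⊗[ℂ] A) :=
  (TensorProduct.assoc ℂ A A A).toLinearMap ∘ₗ (TensorProduct.map D LinearMap.id)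

/-- `Ψ₀ = id ⊗ D` -/
def Psi0 : A ⊗[ℂ] A →ₗ[ℂ] A ⊗[ℂ] (A ⊗[ℂ] A) :=
  TensorProduct.map LinearMap.id D

/-- `ρ : a ⊗ b ↦ a ⊗ (b ⊗ 1)` -/
def rho : A ⊗[ℂ] A →ₗ[ℂ] A ⊗[ℂ] (A ⊗[ℂ] A) :=
  TensorProduct.map LinearMap.id ((TensorProduct.mk ℂ A A).flip (1 : A))

lemma rho_tmul (a b : A) : (rho (a ⊗ₜ[ℂ] b) : A ⊗[ℂ] (A ⊗[ℂ] A)) = a ⊗ₜ[ℂ] (b ⊗ₜ[ℂ] (1:A)) :=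
  rfl

lemma Phi0_tmul (x y : A) : Phi0 D (x ⊗ₜ[ℂ] y) = (TensorProduct.assoc ℂ A A A) (D x ⊗ₜ[ℂ] y) :=
  rfl

lemma Psi0_tmul (x y : A) : Psi0 D (x ⊗ₜ[ℂ] y) = x ⊗ₜ[ℂ] D y := rfl

lemma SB1 (p : A) (w : A ⊗[ℂ] A) (y : A) :
    (TensorProduct.assoc ℂ A A A) (((p ⊗ₜ[ℂ] (1:A)) * w) ⊗ₜ[ℂ] y) =
      (p ⊗ₜ[ℂ] ((1:A) ⊗ₜ[ℂ] (1:A))) * (TensorProduct.assoc ℂ A A A) (w ⊗ₜ[ℂ] y) := by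
  induction w using TensorProduct.induction_on with
  | zero => simp
  | tmul a b =>
    simp only [Algebra.TensorProduct.tmul_mul_tmul, TensorProduct.assoc_tmul, one_mul,
      mul_one]
  | add x y' hx hy =>
    rw [mul_add, TensorProduct.add_tmul, map_add, TensorProduct.add_tmul, map_add, hx, hy,
      mul_add]

lemma SB2 (x : A) (w : A ⊗[ℂ] A) (y : A) :
    (TensorProduct.assoc ℂ A A A) ((w * ((1:A) ⊗ₜ[ℂ] x)) ⊗ₜ[ℂ] y) =
      rho w * ((1:A) ⊗ₜ[ℂ] (x ⊗ₜ[ℂ] y)) := by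
  induction w using TensorProduct.induction_on with
  | zero => simp
  | tmul a b =>
    simp only [Algebra.TensorProduct.tmul_mul_tmul, TensorProduct.assoc_tmul, rho_tmul,
      one_mul, mul_one]
  | add u v hu hv =>
    rw [add_mul, TensorProduct.add_tmul, map_add, map_add, hu, hv, add_mul]

lemma SB3 (w : A ⊗[ℂ] A) (y q : A) :
    (TensorProduct.assoc ℂ A A A) (w ⊗ₜ[ℂ] (y * q)) =
      (TensorProduct.assoc ℂ A A A) (w ⊗ₜ[ℂ] y) * ((1:A) ⊗ₜ[ℂ] ((1:A) ⊗ₜ[ℂ] q)) := by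
  induction w using TensorProduct.induction_on with
  | zero => simp
  | tmul a b =>
    simp only [Algebra.TensorProduct.tmul_mul_tmul, TensorProduct.assoc_tmul, one_mul,
      mul_one]
  | add u v hu hv =>
    rw [TensorProduct.add_tmul, TensorProduct.add_tmul, map_add, map_add, hu, hv, add_mul]

lemma LeibB1 (hD : ∀ p q : A, D (p * q) = (p ⊗ₜ[ℂ] (1 : A)) * D q + D p * ((1 : A) ⊗ₜ[ℂ] q))
    (p : A) (u : A ⊗[ℂ] A) :
    Phi0 D ((p ⊗ₜ[ℂ] (1:A)) * u) =
      (p ⊗ₜ[ℂ] ((1:A) ⊗ₜ[ℂ] (1:A))) * Phi0 D u + rho (D p) * ((1:A) ⊗ₜ[ℂ] u) := by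
  induction u using TensorProduct.induction_on with
  | zero => simp
  | tmul x y =>
    simp only [Algebra.TensorProduct.tmul_mul_tmul, one_mul, mul_one, Phi0_tmul]
    rw [hD, TensorProduct.add_tmul, map_add, SB1, SB2]
  | add x y hx hy =>
    rw [mul_add, map_add, hx, hy, map_add, mul_add, TensorProduct.tmul_add, mul_add]
    abel

lemma LeibB2 (q : A) (u : A ⊗[ℂ] A) :
    Phi0 D (u * ((1:A) ⊗ₜ[ℂ] q)) = Phi0 D u * ((1:A) ⊗ₜ[ℂ] ((1:A) ⊗ₜ[ℂ] q)) := by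
  induction u using TensorProduct.induction_on with
  | zero => simp
  | tmul x y =>
    simp only [Algebra.TensorProduct.tmul_mul_tmul, one_mul, mul_one, Phi0_tmul]
    rw [SB3]
  | add x y hx hy => rw [add_mul, map_add, hx, hy, map_add, add_mul]

lemma LeibC1 (p : A) (u : A ⊗[ℂ] A) :
    Psi0 D ((p ⊗ₜ[ℂ] (1:A)) * u) = (p ⊗ₜ[ℂ] ((1:A) ⊗ₜ[ℂ] (1:A))) * Psi0 D u := by
  induction u using TensorProduct.induction_on with
  | zero => simp
  | tmul x y =>
    simp only [Algebra.TensorProduct.tmul_mul_tmul, one_mul, mul_one, Psi0_tmul]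
    rw [← Algebra.TensorProduct.one_def, one_mul]
  | add x y hx hy => rw [mul_add, map_add, hx, hy, map_add, mul_add]

lemma LeibC2 (hD : ∀ p q : A, D (p * q) = (p ⊗ₜ[ℂ] (1 : A)) * D q + D p * ((1 : A) ⊗ₜ[ℂ] q))
    (q : A) (u : A ⊗[ℂ] A) :
    Psi0 D (u * ((1:A) ⊗ₜ[ℂ] q)) =
      rho u * ((1:A) ⊗ₜ[ℂ] D q) + Psi0 D u * ((1:A) ⊗ₜ[ℂ] ((1:A) ⊗ₜ[ℂ] q)) := by
  induction u using TensorProduct.induction_on with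
  | zero => simp
  | tmul x y =>
    simp only [Algebra.TensorProduct.tmul_mul_tmul, one_mul, mul_one, Psi0_tmul, rho_tmul]
    rw [hD, TensorProduct.tmul_add]
  | add x y hx hy =>
    rw [add_mul, map_add, hx, hy, map_add, map_add, add_mul, add_mul]
    abel

end Symm

section Coassoc

variable {B A : Type} [Ring B] [Algebra ℂ B] [Ring A] [Algebra ℂ A]
variable (ι : B →ₐ[ℂ] A) (X : A) (D : A →ₗ[ℂ] A ⊗[ℂ] A)
variable (hD : ∀ p q : A, D (p * q) = (p ⊗ₜ[ℂ] (1 : A)) * D q + D p * ((1 : A) ⊗ₜ[ℂ] q))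
variable (hDX : D X = (1 : A) ⊗ₜ[ℂ] (1 : A))
variable (hDB : ∀ b : B, D (ι b) = 0)

include hD hDX hDB in
lemma coassoc (hfree : IsFreeProduct ι X) (a : A) : Phi0 D (D a) = Psi0 D (D a) := by
  have ha : a ∈ Algebra.adjoin ℂ (Set.range ι ∪ {X}) := by
    rw [adjoin_eq_top ι X hfree]; trivial
  induction ha using Algebra.adjoin_induction with
  | mem x hx =>
    rcases hx with ⟨b, rfl⟩ | rfl
    · rw [hDB]; simp
    · rw [hDX]
      have h1 : D (1 : A) = 0 := D_one D hD
      simp [Phi0, Psi0, h1]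
  | algebraMap r =>
    have : D ((algebraMap ℂ A) r) = 0 := by
      rw [Algebra.algebraMap_eq_smul_one, map_smul, D_one D hD, smul_zero]
    rw [this]; simp
  | add x y _ _ h1 h2 => simp only [map_add, h1, h2]
  | mul x y _ _ h1 h2 =>
    rw [hD, map_add, map_add, LeibB1 D hD, LeibB2, LeibC1, LeibC2 D hD, h1, h2]
    abel

end Coassoc

section Final

variable {B A : Type} [Ring B] [Algebra ℂ B] [Ring A] [Algebra ℂ A]
variable (ι : B →ₐ[ℂ] A) (X : A) (D : A →ₗ[ℂ] A ⊗[ℂ] A)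
variable (hD : ∀ p q : A, D (p * q) = (p ⊗ₜ[ℂ] (1 : A)) * D q + D p * ((1 : A) ⊗ₜ[ℂ] q))
variable (hDX : D X = (1 : A) ⊗ₜ[ℂ] (1 : A))
variable (hDB : ∀ b : B, D (ι b) = 0)

include hD hDX hDB in
lemma Ddelta_symm (hfree : IsFreeProduct ι X) (q : A) :
    (TensorProduct.comm ℂ A A) (D (cyclicDer D q)) = D (cyclicDer D q) := by
  have h := D_mu_comm D hD (D q)
  have hc := coassoc ι X D hD hDX hDB hfree q
  have hc' : (TensorProduct.assoc ℂ A A A).symm ((TensorProduct.map LinearMap.id D) (D q))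
      = (TensorProduct.map D LinearMap.id) (D q) := by
    rw [show (TensorProduct.map LinearMap.id D) (D q) = Psi0 D (D q) from rfl, ← hc]
    rw [show Phi0 D (D q)
      = (TensorProduct.assoc ℂ A A A) ((TensorProduct.map D LinearMap.id) (D q)) from rfl]
    exact (TensorProduct.assoc ℂ A A A).symm_apply_apply _
  rw [cyclicDer_apply, h, hc', map_add, comm_comm, add_comm]

include hD hDX in
lemma delta_mul_X (p : A) :
    cyclicDer D (p * X) =
      LinearMap.mul' ℂ A ((TensorProduct.comm ℂ A A) (D p) * (X ⊗ₜ[ℂ] (1:A))) + p := by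
  have h1 : LinearMap.mul' ℂ A ((TensorProduct.comm ℂ A A)
      ((p ⊗ₜ[ℂ] (1:A)) * ((1:A) ⊗ₜ[ℂ] (1:A)))) = p := by
    simp [Algebra.TensorProduct.tmul_mul_tmul]
  rw [cyclicDer_apply, hD p X, hDX, map_add, map_add, h1, muσ_right X (D p), add_comm]

end Final

end PoincareAux

/-- Poincaré lemma for cyclic derivatives on `B⟨X⟩`: for `p ∈ B⟨X⟩` the following are
equivalent: (1) `∃ q, δ[q] = p`; (2) `∂[p] = σ(∂[p])`; (3) `δ[D*[p]] = L[p]`,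
where `D*[p] = pX` and `L = N + id`. -/
theorem poincare_cyclic
    {B A : Type} [Ring B] [Algebra ℂ B] [Ring A] [Algebra ℂ A]
    (ι : B →ₐ[ℂ] A) (X : A) (hfree : IsFreeProduct ι X)
    (D : A →ₗ[ℂ] A ⊗[ℂ] A)
    (hD : ∀ p q : A, D (p * q) = (p ⊗ₜ[ℂ] (1 : A)) * D q + D p * ((1 : A) ⊗ₜ[ℂ] q))
    (hDX : D X = (1 : A) ⊗ₜ[ℂ] (1 : A))
    (hDB : ∀ b : B, D (ι b) = 0) :
    ∀ p : A,
      ((∃ q : A, cyclicDer D q = p) ↔ D p = (TensorProduct.comm ℂ A A) (D p))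
      ∧ ((∃ q : A, cyclicDer D q = p) ↔
          cyclicDer D (p * X) = numOp X D p + p) := by
  intro p
  have I1 : (∃ q : A, cyclicDer D q = p) → D p = (TensorProduct.comm ℂ A A) (D p) := by
    rintro ⟨q, rfl⟩
    exact (PoincareAux.Ddelta_symm ι X D hD hDX hDB hfree q).symm
  have I2 : D p = (TensorProduct.comm ℂ A A) (D p) →
      cyclicDer D (p * X) = numOp X D p + p := by
    intro h2
    rw [PoincareAux.delta_mul_X X D hD hDX p, ← h2]
    rfl
  have I3 : cyclicDer D (p * X) = numOp X D p + p → ∃ q : A, cyclicDer D q = p := by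
    intro h3
    obtain ⟨k, hk⟩ := PoincareAux.mem_sle ι X hfree p
    refine ⟨(Polynomial.aeval (numOp X D) (PoincareAux.invPoly k)) p * X, ?_⟩
    have hTheta : ∀ m, (cyclicDer D ∘ₗ LinearMap.mulRight ℂ X) (numOp X D m)
        = numOp X D ((cyclicDer D ∘ₗ LinearMap.mulRight ℂ X) m) := by
      intro m
      simpa using PoincareAux.thetaN ι X D hD hDX hDB hfree m
    have hcomm := PoincareAux.comm_aeval (numOp X D) (cyclicDer D ∘ₗ LinearMap.mulRight ℂ X)
      hTheta (PoincareAux.invPoly k) p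
    have hq : cyclicDer D ((Polynomial.aeval (numOp X D) (PoincareAux.invPoly k)) p * X)
        = (Polynomial.aeval (numOp X D) (PoincareAux.invPoly k)) (cyclicDer D (p * X)) := by
      simpa using hcomm
    rw [hq, h3]
    exact PoincareAux.aeval_inv ι X D hD hDX hDB hk
  exact ⟨⟨I1, fun h2 => I3 (I2 h2)⟩, ⟨fun h1 => I2 (I1 h1), I3⟩⟩
end
end
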